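/- arXiv:2207.05639 — 6 statements merged into one kernel-verified Lean document; each statement's English description precedes it below -/
import Mathlib

section
/- For every integer n ≥ 3, the positive co-degree Turán number of K₄⁻ satisfies co⁺ex(n, K₄⁻) = ⌊n/3⌋. -/
open Finset

/-- The co-degree of a vertex set `S` in the hypergraph with edge set `E`:
the number of edges containing `S`. -/
def coDeg {n : ℕ} (E : Finset (Finset (Fin n))) (S : Finset (Fin n)) : ℕ :=
  (E.filter (fun e => S ⊆ e)).card

/-- The minimum positive co-degree `δ⁺_{r-1}` of an `r`-graph on `Fin n` with edge set `E`:
the largest `k` such that every `(r-1)`-set of vertices contained in at least one edge is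
contained in at least `k` edges (i.e. the minimum of the positive co-degrees). -/
noncomputable def minPosCoDeg (r n : ℕ) (E : Finset (Finset (Fin n))) : ℕ :=
  sInf {d : ℕ | ∃ S : Finset (Fin n), S.card = r - 1 ∧ coDeg E S = d ∧ 0 < d}

/-- `E` contains a copy of `F`: an injection of the vertices of `F` mapping
edges of `F` to edges of `E`. -/
def Contains {α β : Type*} [DecidableEq α] [DecidableEq β]
    (F : Finset (Finset α)) (E : Finset (Finset β)) : Prop :=
  ∃ f : α → β, Function.Injective f ∧ ∀ e ∈ F, e.image f ∈ E

/-- The positive co-degree Turán number `co⁺ex_r(n, F)`: the maximum of the minimum positive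
co-degree over all `F`-free `r`-graphs on `n` vertices with at least one edge. -/
noncomputable def coPlusEx {α : Type*} [DecidableEq α] (r n : ℕ) (F : Finset (Finset α)) : ℕ :=
  sSup {d : ℕ | ∃ E : Finset (Finset (Fin n)),
    (∀ e ∈ E, e.card = r) ∧ E.Nonempty ∧ ¬ Contains F E ∧ minPosCoDeg r n E = d}


def K4minus : Finset (Finset (Fin 4)) := {{0,1,2}, {0,1,3}, {0,2,3}}

def K4 : Finset (Finset (Fin 4)) := {{0,1,2}, {0,1,3}, {0,2,3}, {1,2,3}}

def F5 : Finset (Finset (Fin 5)) := {{0,1,2}, {0,1,3}, {2,3,4}}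

def F32 : Finset (Finset (Fin 5)) := {{0,1,2}, {0,3,4}, {1,3,4}, {2,3,4}}

def Fano : Finset (Finset (Fin 7)) :=
  {{0,1,2}, {2,3,4}, {0,4,5}, {1,3,5}, {0,3,6}, {1,4,6}, {2,5,6}}

def F33 : Finset (Finset (Fin 6)) :=
  {{0,1,2}, {0,3,4}, {0,3,5}, {0,4,5}, {1,3,4}, {1,3,5}, {1,4,5}, {2,3,4}, {2,3,5}, {2,4,5}}

def C5 : Finset (Finset (Fin 5)) := {{0,1,2}, {1,2,3}, {2,3,4}, {0,3,4}, {0,1,4}}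

def C5minus : Finset (Finset (Fin 5)) := {{0,1,2}, {1,2,3}, {2,3,4}, {0,3,4}}

def K222 : Finset (Finset (Fin 6)) :=
  {{0,2,4}, {0,2,5}, {0,3,4}, {0,3,5}, {1,2,4}, {1,2,5}, {1,3,4}, {1,3,5}}

/-- `J k`: the 3-graph on `k+1` vertices whose edges are all triples containing the
distinguished vertex `0`. -/
def Jgraph (k : ℕ) : Finset (Finset (Fin (k+1))) :=
  (Finset.univ.powersetCard 3).filter (fun e => (0 : Fin (k+1)) ∈ e)

/-- `E` is (isomorphic to) the complete balanced `k`-partite 3-graph on `n` vertices: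
there is a partition of the vertices into `k` classes whose sizes differ by at most one,
such that the edges are exactly the triples of vertices in three pairwise distinct classes. -/
def IsCompleteBalancedMultipartite (n k : ℕ) (E : Finset (Finset (Fin n))) : Prop :=
  ∃ f : Fin n → Fin k,
    (∀ i j : Fin k, (Finset.univ.filter (fun v => f v = i)).card ≤
      (Finset.univ.filter (fun v => f v = j)).card + 1) ∧
    ∀ e : Finset (Fin n), e ∈ E ↔ (e.card = 3 ∧ (e.image f).card = 3)

/-- The unique (6,3,2)-design `H₆`. -/
def H6 : Finset (Finset (Fin 6)) :=
  {{0,1,2}, {0,1,3}, {2,3,4}, {2,3,5}, {0,4,5}, {1,4,5}, {0,2,4}, {0,3,5}, {1,2,5}, {1,3,4}}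

/-- `E` is (isomorphic to) a balanced blow-up of `H₆` on `n` vertices: the vertices are
partitioned into six classes of equal size, and the edges are exactly the triples whose
three vertices lie in classes forming an edge of `H₆`. -/
def IsBalancedH6Blowup (n : ℕ) (E : Finset (Finset (Fin n))) : Prop :=
  ∃ f : Fin n → Fin 6,
    (∀ i j : Fin 6, (Finset.univ.filter (fun v => f v = i)).card =
      (Finset.univ.filter (fun v => f v = j)).card) ∧
    ∀ e : Finset (Fin n), e ∈ E ↔ (e.card = 3 ∧ e.image f ∈ H6)


/-!
An edge `xyz` of a `K₄⁻`-free 3-graph has pairwise disjoint links `N(xy)`, `N(xz)`, `N(yz)`: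
a common vertex `w` of two of them, say of `N(xy)` and `N(xz)`, would give the copy
`xyz, xyw, xzw` of `K₄⁻`. Each link has at least `δ₂⁺` vertices, so `3 δ₂⁺ ≤ n`.
Conversely, the complete 3-partite 3-graph (the rainbow triples) on the classes of residues
mod 3 is `K₄⁻`-free (any two vertices of `K₄⁻` share an edge, so a copy would need four
colours), and in it a pair from two classes has co-degree the size of the third class,
which is at least `⌊n/3⌋`.
-/

section MinPosCoDeg

variable {r n : ℕ} {E : Finset (Finset (Fin n))}

lemma minPosCoDeg_le_coDeg {S : Finset (Fin n)} (hS : #S = r - 1) (hpos : 0 < coDeg E S) :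
    minPosCoDeg r n E ≤ coDeg E S :=
  Nat.sInf_le ⟨S, hS, rfl, hpos⟩

lemma le_minPosCoDeg {m : ℕ} (hE : ∀ e ∈ E, #e = r) (hne : E.Nonempty)
    (hm : ∀ S : Finset (Fin n), #S = r - 1 → 0 < coDeg E S → m ≤ coDeg E S) :
    m ≤ minPosCoDeg r n E := by
  obtain ⟨e, he⟩ := hne
  obtain ⟨S, hSe, hS⟩ := exists_subset_card_eq (s := e) (n := r - 1) (by rw [hE e he]; omega)
  have hpos : 0 < coDeg E S := card_pos.mpr ⟨e, mem_filter.mpr ⟨he, hSe⟩⟩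
  refine le_csInf ⟨_, S, hS, rfl, hpos⟩ ?_
  rintro d ⟨S, hS, rfl, hpos⟩
  exact hm S hS hpos

end MinPosCoDeg

lemma coPlusEx_eq {α : Type*} [DecidableEq α] {r n m : ℕ} {F : Finset (Finset α)}
    (hle : ∀ E : Finset (Finset (Fin n)), (∀ e ∈ E, #e = r) → E.Nonempty → ¬ Contains F E →
      minPosCoDeg r n E ≤ m)
    (hex : ∃ E : Finset (Finset (Fin n)), (∀ e ∈ E, #e = r) ∧ E.Nonempty ∧ ¬ Contains F E ∧
      m ≤ minPosCoDeg r n E) :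
    coPlusEx r n F = m := by
  obtain ⟨E, hr, hne, hfree, hm⟩ := hex
  have hmE := le_antisymm (hle E hr hne hfree) hm
  refine le_antisymm (csSup_le ⟨_, E, hr, hne, hfree, hmE⟩ ?_)
    (le_csSup ⟨m, ?_⟩ ⟨E, hr, hne, hfree, hmE⟩) <;>
  · rintro d ⟨E, hr, hne, hfree, rfl⟩
    exact hle E hr hne hfree

lemma ne_of_card_eq_three {α : Type*} [DecidableEq α] {a b c : α} (h : #{a, b, c} = 3) :
    a ≠ b ∧ a ≠ c ∧ b ≠ c := by
  refine ⟨?_, ?_, ?_⟩ <;> rintro rfl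
  · have := card_le_two (a := a) (b := c); simp_all
  · have := card_le_two (a := a) (b := b); simp_all [pair_comm]
  · have := card_le_two (a := a) (b := b); simp_all

section UpperBound

variable {n : ℕ} {E : Finset (Finset (Fin n))}

def link (E : Finset (Finset (Fin n))) (a b : Fin n) : Finset (Fin n) :=
  {w | {a, b, w} ∈ E}

lemma link_comm (a b : Fin n) : link E a b = link E b a := by
  simp only [link, insert_comm a b]

lemma coDeg_pair_eq_card_link (hE : ∀ e ∈ E, #e = 3) {a b : Fin n} (hab : a ≠ b) :
    coDeg E {a, b} = #(link E a b) := by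
  symm
  refine card_bij (fun w _ => {a, b, w}) (fun w hw => ?_) (fun w hw w' hw' h => ?_)
    (fun e he => ?_)
  · simp only [link, mem_filter, mem_univ, true_and] at hw
    exact mem_filter.mpr ⟨hw, by simp [insert_subset_iff]⟩
  · simp only [link, mem_filter, mem_univ, true_and] at hw
    obtain ⟨-, haw, hbw⟩ := ne_of_card_eq_three (hE _ hw)
    have : w ∈ ({a, b, w'} : Finset (Fin n)) := h ▸ by simp
    simp only [mem_insert, mem_singleton] at this
    grind
  · obtain ⟨he, hab_e⟩ := mem_filter.mp he
    obtain ⟨w, hw⟩ := card_eq_one.mp (by rw [card_sdiff_of_subset hab_e, hE e he, card_pair hab])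
    have hew : e = {a, b, w} := by
      rw [← union_sdiff_of_subset hab_e, hw]
      ext; simp
    exact ⟨w, by simpa [link, ← hew] using he, hew.symm⟩

lemma contains_K4minus {p q r w : Fin n} (hE : ∀ e ∈ E, #e = 3)
    (hpqr : {p, q, r} ∈ E) (hpqw : {p, q, w} ∈ E) (hprw : {p, r, w} ∈ E) :
    Contains K4minus E := by
  obtain ⟨hpq, hpr, hqr⟩ := ne_of_card_eq_three (hE _ hpqr)
  obtain ⟨-, hpw, hqw⟩ := ne_of_card_eq_three (hE _ hpqw)
  obtain ⟨-, -, hrw⟩ := ne_of_card_eq_three (hE _ hprw)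
  refine ⟨![p, q, r, w], ?_, ?_⟩
  · intro i j hij
    fin_cases i <;> fin_cases j <;> simp_all [eq_comm]
  · simp only [K4minus, mem_insert, mem_singleton, forall_eq_or_imp, forall_eq]
    simp [image_insert, hpqr, hpqw, hprw]

lemma disjoint_link_of_not_contains (hE : ∀ e ∈ E, #e = 3) (hfree : ¬ Contains K4minus E)
    {x y z : Fin n} (hxyz : {x, y, z} ∈ E) : Disjoint (link E x y) (link E x z) := by
  refine disjoint_left.mpr fun w hxy hxz => hfree ?_
  simp only [link, mem_filter, mem_univ, true_and] at hxy hxz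
  exact contains_K4minus hE hxyz hxy hxz

lemma minPosCoDeg_le_card_link (hE : ∀ e ∈ E, #e = 3) {a b c : Fin n} (habc : {a, b, c} ∈ E)
    (hab : a ≠ b) : minPosCoDeg 3 n E ≤ #(link E a b) := by
  rw [← coDeg_pair_eq_card_link hE hab]
  refine minPosCoDeg_le_coDeg (card_pair hab) ?_
  rw [coDeg_pair_eq_card_link hE hab]
  exact card_pos.mpr ⟨c, by simpa [link] using habc⟩

lemma three_mul_minPosCoDeg_le (hE : ∀ e ∈ E, #e = 3) (hne : E.Nonempty)
    (hfree : ¬ Contains K4minus E) : 3 * minPosCoDeg 3 n E ≤ n := by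
  obtain ⟨e, he⟩ := hne
  obtain ⟨x, y, z, hxy, hxz, hyz, rfl⟩ := card_eq_three.mp (hE e he)
  have hperm : ∀ {a b c : Fin n}, {a, b, c} = ({x, y, z} : Finset (Fin n)) → {a, b, c} ∈ E :=
    fun h => h ▸ he
  have hxzy := hperm (a := x) (b := z) (c := y) (by ext; simp; tauto)
  have hyxz := hperm (a := y) (b := x) (c := z) (by ext; simp; tauto)
  have hyzx := hperm (a := y) (b := z) (c := x) (by ext; simp; tauto)
  have hzxy := hperm (a := z) (b := x) (c := y) (by ext; simp; tauto)
  have h12 := disjoint_link_of_not_contains hE hfree he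
  have h13 := disjoint_link_of_not_contains hE hfree hyxz
  have h23 := disjoint_link_of_not_contains hE hfree hzxy
  rw [link_comm y x] at h13
  rw [link_comm z x, link_comm z y] at h23
  calc 3 * minPosCoDeg 3 n E
      ≤ #(link E x y) + #(link E x z) + #(link E y z) := by
        have := minPosCoDeg_le_card_link hE he hxy
        have := minPosCoDeg_le_card_link hE hxzy hxz
        have := minPosCoDeg_le_card_link hE hyzx hyz
        omega
    _ = #(link E x y ∪ link E x z ∪ link E y z) := by
        rw [card_union_of_disjoint (disjoint_union_left.mpr ⟨h13, h23⟩),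
          card_union_of_disjoint h12]
    _ ≤ n := card_le_univ _ |>.trans_eq (Fintype.card_fin n)

end UpperBound

section Rainbow

variable {n k : ℕ}

def rainbowTriples (c : Fin n → Fin k) : Finset (Finset (Fin n)) :=
  {e ∈ univ.powersetCard 3 | #(e.image c) = 3}

variable {c : Fin n → Fin k}

lemma mem_rainbowTriples {e : Finset (Fin n)} :
    e ∈ rainbowTriples c ↔ #e = 3 ∧ #(e.image c) = 3 := by
  simp [rainbowTriples]

lemma card_of_mem_rainbowTriples : ∀ e ∈ rainbowTriples c, #e = 3 :=
  fun _ he => (mem_rainbowTriples.mp he).1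

lemma apply_ne_of_mem_rainbowTriples {e : Finset (Fin n)} (he : e ∈ rainbowTriples c)
    {a b : Fin n} (ha : a ∈ e) (hb : b ∈ e) (hab : a ≠ b) : c a ≠ c b := by
  obtain ⟨he3, hce3⟩ := mem_rainbowTriples.mp he
  exact fun h => hab (card_image_iff.mp (hce3.trans he3.symm) ha hb h)

lemma not_contains_rainbowTriples {α : Type*} [Fintype α] [DecidableEq α]
    {F : Finset (Finset α)} (hF : ∀ i j : α, i ≠ j → ∃ f ∈ F, i ∈ f ∧ j ∈ f)
    (hk : k < Fintype.card α) : ¬ Contains F (rainbowTriples c) := by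
  rintro ⟨φ, hφ, hmap⟩
  suffices Function.Injective (c ∘ φ) by
    have := Fintype.card_le_of_injective _ this
    rw [Fintype.card_fin] at this
    omega
  intro i j hij
  by_contra hne
  obtain ⟨f, hf, hi, hj⟩ := hF i j hne
  exact apply_ne_of_mem_rainbowTriples (hmap f hf) (mem_image_of_mem φ hi)
    (mem_image_of_mem φ hj) (hφ.ne hne) hij

lemma insert_mem_rainbowTriples {a b d : Fin n}
    (h : #(({a, b, d} : Finset (Fin n)).image c) = 3) : {a, b, d} ∈ rainbowTriples c :=
  mem_rainbowTriples.mpr ⟨le_antisymm card_le_three (h ▸ card_image_le), h⟩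

lemma rainbowTriples_nonempty {c : Fin n → Fin 3} (hc : Function.Surjective c) :
    (rainbowTriples c).Nonempty := by
  obtain ⟨a, ha⟩ := hc 0
  obtain ⟨b, hb⟩ := hc 1
  obtain ⟨d, hd⟩ := hc 2
  exact ⟨{a, b, d}, insert_mem_rainbowTriples (by simp [ha, hb, hd])⟩

lemma fiber_subset_link_rainbowTriples {c : Fin n → Fin 3} {a b : Fin n} {i : Fin 3}
    (hab : c a ≠ c b) (hia : i ≠ c a) (hib : i ≠ c b) :
    ({v | c v = i} : Finset (Fin n)) ⊆ link (rainbowTriples c) a b := by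
  intro v hv
  simp only [link, mem_filter, mem_univ, true_and] at hv ⊢
  apply insert_mem_rainbowTriples
  rw [image_insert, image_insert, image_singleton, hv]
  exact card_eq_three.mpr ⟨_, _, _, hab, hia.symm, hib.symm, rfl⟩

lemma le_minPosCoDeg_rainbowTriples {c : Fin n → Fin 3} (hc : Function.Surjective c) {m : ℕ}
    (hm : ∀ i, m ≤ #{v | c v = i}) : m ≤ minPosCoDeg 3 n (rainbowTriples c) := by
  refine le_minPosCoDeg card_of_mem_rainbowTriples (rainbowTriples_nonempty hc) ?_
  intro S hS hpos
  obtain ⟨a, b, hab, rfl⟩ := card_eq_two.mp hS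
  obtain ⟨e, he⟩ := card_pos.mp hpos
  obtain ⟨he, habe⟩ := mem_filter.mp he
  have hcab := apply_ne_of_mem_rainbowTriples he (habe (by simp)) (habe (by simp)) hab
  obtain ⟨i, hia, hib⟩ : ∃ i, i ≠ c a ∧ i ≠ c b := by
    have : ∀ j l : Fin 3, ∃ i, i ≠ j ∧ i ≠ l := by decide
    exact this _ _
  calc m ≤ #{v | c v = i} := hm i
    _ ≤ #(link (rainbowTriples c) a b) :=
      card_le_card (fiber_subset_link_rainbowTriples hcab hia hib)
    _ = coDeg (rainbowTriples c) {a, b} :=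
      (coDeg_pair_eq_card_link card_of_mem_rainbowTriples hab).symm

end Rainbow

lemma div_three_le_card_fiber_ofNat (n : ℕ) (i : Fin 3) :
    n / 3 ≤ #{v : Fin n | Fin.ofNat 3 v = i} := by
  have hi := i.isLt
  rw [← card_range (n / 3)]
  refine card_le_card_of_surjOn (fun v : Fin n => v.val / 3) fun k hk => ?_
  simp only [coe_range, Set.mem_Iio] at hk
  refine ⟨⟨3 * k + i, by omega⟩, by simp [Fin.ext_iff], by simp only; omega⟩

/-- For every integer `n ≥ 3`, `co⁺ex(n, K₄⁻) = ⌊n/3⌋`. -/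
theorem coPlusEx_K4minus (n : ℕ) (hn : 3 ≤ n) :
    coPlusEx 3 n K4minus = n / 3 := by
  set c : Fin n → Fin 3 := fun v => Fin.ofNat 3 v
  have hfiber : ∀ i, n / 3 ≤ #{v | c v = i} := div_three_le_card_fiber_ofNat n
  have hc : Function.Surjective c := fun i => by
    obtain ⟨v, hv⟩ := card_pos.mp ((by omega : 0 < n / 3).trans_le (hfiber i))
    exact ⟨v, (mem_filter.mp hv).2⟩
  refine coPlusEx_eq (fun E hE hne hfree => ?_) ⟨rainbowTriples c, card_of_mem_rainbowTriples,
    rainbowTriples_nonempty hc, not_contains_rainbowTriples (by decide) (by simp),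
    le_minPosCoDeg_rainbowTriples hc hfiber⟩
  have := three_mul_minPosCoDeg_le hE hne hfree
  omega
end

section
/- Let n ≥ 3 be divisible by 3 and let H be a K₄⁻-free 3-graph on n vertices with at least one edge and δ₂⁺(H) = n/3. If n ≡ 0 (mod 6), then H is isomorphic either to the complete balanced 3-partite 3-graph on n vertices or to the balanced blow-up of H₆ on n vertices (all six classes of size n/6). If n ≡ 3 (mod 6), then H is isomorphic to the complete balanced 3-partite 3-graph on n vertices. -/
open Finset

namespace K4X

/-! ### Finite combinatorics of `H6` -/

def pv : Fin 15 → Fin 6 × Fin 6 :=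
  ![(0,1),(0,2),(0,3),(0,4),(0,5),(1,2),(1,3),(1,4),(1,5),(2,3),(2,4),(2,5),(3,4),(3,5),(4,5)]

def starB (k : Fin 6) (p : Fin 15) : Bool :=
  decide (({(pv p).1, (pv p).2, k} : Finset (Fin 6)) ∈ H6)

def exOne (a b c : Bool) : Bool := (a && !b && !c) || (!a && b && !c) || (!a && !b && c)

lemma exOne_decide {P1 P2 P3 : Prop} [Decidable P1] [Decidable P2] [Decidable P3]
    (h : (P1 ∧ ¬P2 ∧ ¬P3) ∨ (¬P1 ∧ P2 ∧ ¬P3) ∨ (¬P1 ∧ ¬P2 ∧ P3)) :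
    exOne (decide P1) (decide P2) (decide P3) = true := by
  rcases h with ⟨h1,h2,h3⟩|⟨h1,h2,h3⟩|⟨h1,h2,h3⟩ <;> simp [exOne, h1, h2, h3]

set_option maxHeartbeats 4000000 in
set_option maxRecDepth 10000 in
lemma core : ∀ b0 b1 b2 b3 b4 b5 b6 b7 b8 b9 b10 b11 b12 b13 b14 : Bool,
    (exOne b0 b1 b5 && exOne b0 b2 b6 && exOne b9 b10 b12 &&
    exOne b9 b11 b13 && exOne b3 b4 b14 && exOne b7 b8 b14 &&
    exOne b1 b3 b10 && exOne b2 b4 b13 && exOne b5 b8 b11 &&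
    exOne b6 b7 b12) = true →
    ∃ k : Fin 6, ∀ p : Fin 15,
      ![b0,b1,b2,b3,b4,b5,b6,b7,b8,b9,b10,b11,b12,b13,b14] p = starB k p := by
  decide

lemma c5core : ∀ (k : Fin 6) (b0 b1 b2 b3 b4 b5 : Bool),
    (∀ p : Fin 15, starB k p = true →
      ¬ (![b0,b1,b2,b3,b4,b5] (pv p).1 = ![b0,b1,b2,b3,b4,b5] (pv p).2)) → False := by
  decide

lemma ptab : ∀ i j : Fin 6, i ≠ j → ∃ p : Fin 15, pv p = (i,j) ∨ pv p = (j,i) := by decide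

lemma starB_iff (k : Fin 6) (p : Fin 15) :
    starB k p = true ↔ ({(pv p).1, (pv p).2, k} : Finset (Fin 6)) ∈ H6 := by
  unfold starB; exact decide_eq_true_iff

def tblIdx : Fin 6 → Fin 6 → Fin 15 :=
  ![![0,14,13,10,6,5],
    ![14,0,12,11,1,2],
    ![13,12,0,0,8,3],
    ![10,11,0,0,4,7],
    ![6,1,8,4,0,9],
    ![5,2,3,7,9,0]]

lemma tbl_spec : ∀ l l' t : Fin 6, l ≠ l' →
    (starB t (tblIdx l l') = true ↔ (t = l ∨ t = l')) := by decide

lemma extbl : ∀ i j : Fin 6, ∃ t : Fin 6, t ≠ i ∧ t ≠ j := by decide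

lemma h6card : ∀ s ∈ H6, s.card = 3 := by decide

lemma starB_self : ∀ l l' : Fin 6, l ≠ l' → starB l (tblIdx l l') = true := by decide


variable {n : ℕ}

def Edg (E : Finset (Finset (Fin n))) (x y z : Fin n) : Prop :=
  ({x,y,z} : Finset (Fin n)) ∈ E

instance (E : Finset (Finset (Fin n))) (x y z : Fin n) : Decidable (Edg E x y z) := by
  unfold Edg; infer_instance

def Cov (E : Finset (Finset (Fin n))) (x y : Fin n) : Prop := ∃ z, Edg E x y z

def Nb (E : Finset (Finset (Fin n))) (x y : Fin n) : Finset (Fin n) :=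
  univ.filter (fun z => Edg E x y z)

lemma mem_Nb {E : Finset (Finset (Fin n))} {x y z : Fin n} :
    z ∈ Nb E x y ↔ Edg E x y z := by simp [Nb]

lemma tri_comm {α : Type*} [DecidableEq α] (x y z : α) :
    ({x,y,z} : Finset α) = {y,x,z} := by
  ext t; simp; tauto

lemma tri_rot {α : Type*} [DecidableEq α] (x y z : α) :
    ({x,y,z} : Finset α) = {y,z,x} := by
  ext t; simp; tauto

lemma tri_swap23 {α : Type*} [DecidableEq α] (x y z : α) :
    ({x,y,z} : Finset α) = {x,z,y} := by
  ext t; simp; tauto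

lemma card3_ne {α : Type*} [DecidableEq α] {x y z : α}
    (h : ({x,y,z} : Finset α).card = 3) : x ≠ y ∧ x ≠ z ∧ y ≠ z := by
  refine ⟨?_, ?_, ?_⟩
  · rintro rfl
    rw [insert_idem] at h
    have := card_insert_le x ({z} : Finset α)
    rw [h] at this; simp at this
  · rintro rfl
    rw [show ({x,y,x} : Finset α) = {y,x} from insert_eq_self.2 (by simp)] at h
    have := card_insert_le y ({x} : Finset α)
    rw [h] at this; simp at this
  · rintro rfl
    rw [show ({x,y,y} : Finset α) = {x,y} by
      rw [show (insert y ({y} : Finset α)) = {y} from insert_eq_self.2 (by simp)]] at h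
    have := card_insert_le x ({y} : Finset α)
    rw [h] at this; simp at this

variable {E : Finset (Finset (Fin n))}

lemma Edg.s12 {x y z : Fin n} (h : Edg E x y z) : Edg E y x z := by
  unfold Edg at *; rwa [← tri_comm]

lemma Edg.s23 {x y z : Fin n} (h : Edg E x y z) : Edg E x z y := by
  unfold Edg at *; rwa [← tri_swap23]

lemma Edg.rot {x y z : Fin n} (h : Edg E x y z) : Edg E y z x := by
  unfold Edg at *; rwa [← tri_rot]

lemma Edg.rot2 {x y z : Fin n} (h : Edg E x y z) : Edg E z x y := h.rot.rot

lemma Edg.s13 {x y z : Fin n} (h : Edg E x y z) : Edg E z y x := h.rot2.s23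

lemma Cov.symm {x y : Fin n} (h : Cov E x y) : Cov E y x := by
  obtain ⟨z, hz⟩ := h; exact ⟨z, hz.s12⟩

/-- Context: all the standing hypotheses. -/
structure Ctx (E : Finset (Finset (Fin n))) (m : ℕ) : Prop where
  hcard : ∀ e ∈ E, e.card = 3
  nok4 : ∀ a x y z : Fin n, Edg E a x y → Edg E a x z → Edg E a y z → y = z
  hdel : ∀ x y : Fin n, Cov E x y → m ≤ (Nb E x y).card
  hn : n = 3 * m

namespace Ctx

variable {m : ℕ} (C : Ctx E m)
include C

lemma ne12 {x y z : Fin n} (h : Edg E x y z) : x ≠ y := by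
  intro he
  have h3 := C.hcard _ h
  subst he
  have : ({x,x,z} : Finset (Fin n)) = {x,z} := insert_idem x {z}
  rw [this] at h3
  have := card_insert_le x ({z} : Finset (Fin n))
  rw [h3] at this
  simp at this

lemma ne23 {x y z : Fin n} (h : Edg E x y z) : y ≠ z := C.ne12 h.rot
lemma ne13 {x y z : Fin n} (h : Edg E x y z) : x ≠ z := C.ne12 h.rot2.s12

/-- The workhorse: two elements of a co-neighborhood cannot form an edge
with either of the two base vertices. -/
lemma cap {p q u v : Fin n} (h1 : Edg E p q u) (h2 : Edg E p q v)
    (h3 : Edg E u v p) : False := by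
  have := C.nok4 p q u v h1 h2 h3.rot2
  exact C.ne12 h3.s12 this.symm

lemma cap' {p q u v : Fin n} (h1 : Edg E p q u) (h2 : Edg E p q v)
    (h3 : Edg E u v q) : False :=
  C.cap h1.s12 h2.s12 h3


lemma not_and_ab_ac {a b c z : Fin n} (h : Edg E a b c) : ¬(Edg E a b z ∧ Edg E a c z) := by
  rintro ⟨h1, h2⟩
  have hcz := C.nok4 a b c z h h1 h2
  exact C.ne23 h2 (hcz ▸ rfl)

lemma not_and_ab_bc {a b c z : Fin n} (h : Edg E a b c) : ¬(Edg E a b z ∧ Edg E b c z) := by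
  rintro ⟨h1, h2⟩
  have hcz := C.nok4 b a c z h.s12 h1.s12 h2
  exact C.ne23 h2 (hcz ▸ rfl)

lemma not_and_ac_bc {a b c z : Fin n} (h : Edg E a b c) : ¬(Edg E a c z ∧ Edg E b c z) := by
  rintro ⟨h1, h2⟩
  have hbz := C.nok4 c a b z h.rot2 h1.s12 h2.s12
  exact C.ne13 h2 (hbz ▸ rfl)

lemma nb_partition {a b c : Fin n} (h : Edg E a b c) :
    (Nb E a b).card = m ∧ (Nb E a c).card = m ∧ (Nb E b c).card = m ∧
    Nb E a b ∪ Nb E a c ∪ Nb E b c = univ := by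
  have hd1 : Disjoint (Nb E a b) (Nb E a c) := by
    rw [disjoint_left]; intro z h1 h2
    exact C.not_and_ab_ac h ⟨mem_Nb.1 h1, mem_Nb.1 h2⟩
  have hd2 : Disjoint (Nb E a b) (Nb E b c) := by
    rw [disjoint_left]; intro z h1 h2
    exact C.not_and_ab_bc h ⟨mem_Nb.1 h1, mem_Nb.1 h2⟩
  have hd3 : Disjoint (Nb E a c) (Nb E b c) := by
    rw [disjoint_left]; intro z h1 h2
    exact C.not_and_ac_bc h ⟨mem_Nb.1 h1, mem_Nb.1 h2⟩
  have hcu : (Nb E a b ∪ Nb E a c ∪ Nb E b c).card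
      = (Nb E a b).card + (Nb E a c).card + (Nb E b c).card := by
    rw [card_union_of_disjoint, card_union_of_disjoint hd1]
    exact disjoint_union_left.2 ⟨hd2, hd3⟩
  have h1 : m ≤ (Nb E a b).card := C.hdel a b ⟨c, h⟩
  have h2 : m ≤ (Nb E a c).card := C.hdel a c ⟨b, h.s23⟩
  have h3 : m ≤ (Nb E b c).card := C.hdel b c ⟨a, h.rot⟩
  have hle : (Nb E a b ∪ Nb E a c ∪ Nb E b c).card ≤ 3 * m := by
    have := card_le_univ (Nb E a b ∪ Nb E a c ∪ Nb E b c)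
    rw [Fintype.card_fin] at this
    have hn := C.hn; omega
  have e1 : (Nb E a b).card = m := by omega
  have e2 : (Nb E a c).card = m := by omega
  have e3 : (Nb E b c).card = m := by omega
  refine ⟨e1, e2, e3, eq_univ_of_card _ ?_⟩
  rw [hcu, e1, e2, e3, Fintype.card_fin]
  have hn := C.hn; omega

lemma exactly_one {a b c : Fin n} (h : Edg E a b c) (z : Fin n) :
    (Edg E a b z ∧ ¬Edg E a c z ∧ ¬Edg E b c z) ∨
    (¬Edg E a b z ∧ Edg E a c z ∧ ¬Edg E b c z) ∨
    (¬Edg E a b z ∧ ¬Edg E a c z ∧ Edg E b c z) := by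
  have hu := (C.nb_partition h).2.2.2
  have hz : z ∈ Nb E a b ∪ Nb E a c ∪ Nb E b c := hu ▸ mem_univ z
  simp only [mem_union, mem_Nb] at hz
  have d1 := C.not_and_ab_ac (z := z) h
  have d2 := C.not_and_ab_bc (z := z) h
  have d3 := C.not_and_ac_bc (z := z) h
  tauto

lemma no_edge_in_nb {p q x y z : Fin n} (hx : Edg E p q x) (hy : Edg E p q y)
    (hz : Edg E p q z) (he : Edg E x y z) : False := by
  rcases C.exactly_one he p with ⟨h1,_,_⟩|⟨_,h2,_⟩|⟨_,_,h3⟩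
  · exact C.cap hx hy h1
  · exact C.cap hx hz h2
  · exact C.cap hy hz h3

lemma subst {u v x y : Fin n} (hnc : ¬ Cov E u v) (h : Edg E u x y) : Edg E v x y := by
  rcases C.exactly_one h v with ⟨h1,_,_⟩|⟨_,h2,_⟩|⟨_,_,h3⟩
  · exact absurd ⟨x, h1.s23⟩ hnc
  · exact absurd ⟨y, h2.s23⟩ hnc
  · exact h3.rot2


omit C in
lemma fin3cases : ∀ t : Fin 3, t = 0 ∨ t = 1 ∨ t = 2 := by decide

end Ctx

/-- A system of six representatives realizing the `H6` pattern. -/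
structure Reps (E : Finset (Finset (Fin n))) (v0 v1 v2 v3 v4 v5 : Fin n) : Prop where
  e012 : Edg E v0 v1 v2
  e013 : Edg E v0 v1 v3
  e234 : Edg E v2 v3 v4
  e235 : Edg E v2 v3 v5
  e045 : Edg E v0 v4 v5
  e145 : Edg E v1 v4 v5
  e024 : Edg E v0 v2 v4
  e035 : Edg E v0 v3 v5
  e125 : Edg E v1 v2 v5
  e134 : Edg E v1 v3 v4

namespace Ctx

variable {m : ℕ} (C : Ctx E m)
include C

lemma caseIIa {a b c c' w : Fin n} (h : Edg E a b c) (h' : Edg E a b c')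
    (hw1 : Edg E c c' w) (hw2 : Edg E b c w) :
    ∃ v4, Reps E a b c c' v4 w := by
  have hna : ¬ Edg E c c' a := fun hx => C.cap h h' hx
  have hnb : ¬ Edg E c c' b := fun hx => C.cap' h h' hx
  have hWcard : (Nb E c c').card = m := (C.nb_partition hw1).1
  have hAcard : (Nb E b c).card = m := (C.nb_partition h).2.2.1
  have hex : ∃ w₂, Edg E c c' w₂ ∧ Edg E a c w₂ := by
    by_contra hno; push_neg at hno
    have hsub : Nb E c c' ⊆ Nb E b c := by
      intro z hz; rw [mem_Nb] at *
      rcases C.exactly_one h z with ⟨h1,_,_⟩|⟨_,h2,_⟩|⟨_,_,h3⟩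
      · exact absurd (C.no_edge_in_nb h h' h1 hz) (fun hf => hf)
      · exact absurd h2 (hno z hz)
      · exact h3
    have heq : Nb E c c' = Nb E b c :=
      Finset.eq_of_subset_of_card_le hsub (by rw [hWcard, hAcard])
    have ha : a ∈ Nb E c c' := by rw [heq]; exact mem_Nb.2 h.rot
    exact hna (mem_Nb.1 ha)
  obtain ⟨w₂, hw₂1, hw₂2⟩ := hex
  have hnacw : ¬ Edg E a c w := by
    intro hacw
    have hbw := C.nok4 c a b w h.rot2 hacw.s12 hw2.s12
    rw [← hbw] at hw1
    exact hnb hw1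
  have hnbcw₂ : ¬ Edg E b c w₂ := by
    intro hx
    have hbw := C.nok4 c a b w₂ h.rot2 hw₂2.s12 hx.s12
    rw [← hbw] at hw₂1
    exact hnb hw₂1
  have e035 : Edg E a c' w := by
    rcases C.exactly_one hw1 a with ⟨h1,_,_⟩|⟨_,h2,_⟩|⟨_,_,h3⟩
    · exact absurd h1 hna
    · exact absurd h2.rot2 hnacw
    · exact h3.rot2
  have e134 : Edg E b c' w₂ := by
    rcases C.exactly_one hw₂1 b with ⟨h1,_,_⟩|⟨_,h2,_⟩|⟨_,_,h3⟩
    · exact absurd h1 hnb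
    · exact absurd h2.rot2 hnbcw₂
    · exact h3.rot2
  have hnc'w₂a : ¬ Edg E c' w₂ a := by
    rcases C.exactly_one hw₂1 a with ⟨h1,_,_⟩|⟨_,_,hn3⟩|⟨_,hn2,_⟩
    · exact absurd h1 hna
    · exact hn3
    · exact absurd hw₂2.rot hn2
  have hnc'wb : ¬ Edg E c' w b := by
    rcases C.exactly_one hw1 b with ⟨h1,_,_⟩|⟨_,_,hn3⟩|⟨_,hn2,_⟩
    · exact absurd h1 hnb
    · exact hn3
    · exact absurd (hw2.s12.s23) hn2
  have hn345 : ¬ Edg E w w₂ c' := fun hx => C.cap' hw1 hw₂1 hx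
  have e045 : Edg E a w₂ w := by
    rcases C.exactly_one e035 w₂ with ⟨h1,_,_⟩|⟨_,h2,_⟩|⟨_,_,h3⟩
    · exact absurd h1.rot hnc'w₂a
    · exact h2.s23
    · exact absurd h3.rot hn345
  have e145 : Edg E b w₂ w := by
    rcases C.exactly_one e134 w with ⟨h1,_,_⟩|⟨_,h2,_⟩|⟨_,_,h3⟩
    · exact absurd h1.rot hnc'wb
    · exact h2
    · exact absurd h3.rot.s12 hn345
  exact ⟨w₂, ⟨h, h', hw₂1, hw1, e045, e145, hw₂2, e035, hw2, e134⟩⟩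

lemma caseI {a b c : Fin n} (h : Edg E a b c)
    (pA : ∀ x y, Edg E b c x → Edg E b c y → Cov E x y → x = y)
    (pB : ∀ x y, Edg E a c x → Edg E a c y → Cov E x y → x = y)
    (pC : ∀ x y, Edg E a b x → Edg E a b y → Cov E x y → x = y) :
    IsCompleteBalancedMultipartite n 3 E := by
  classical
  set f : Fin n → Fin 3 :=
    fun v => if Edg E b c v then 0 else if Edg E a c v then 1 else 2 with hfdef
  have hf0 : ∀ v, f v = 0 ↔ Edg E b c v := by
    intro v; simp only [hfdef]
    split_ifs with h1 h2
    · simp [h1]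
    · exact ⟨fun hv => absurd hv (by decide), fun hv => absurd hv h1⟩
    · exact ⟨fun hv => absurd hv (by decide), fun hv => absurd hv h1⟩
  have hf1 : ∀ v, f v = 1 ↔ Edg E a c v := by
    intro v; simp only [hfdef]
    split_ifs with h1 h2
    · exact ⟨fun hv => absurd hv (by decide),
        fun hv => absurd ⟨hv, h1⟩ (C.not_and_ac_bc h)⟩
    · simp [h2]
    · exact ⟨fun hv => absurd hv (by decide), fun hv => absurd hv h2⟩
  have hf2 : ∀ v, f v = 2 ↔ Edg E a b v := by
    intro v; simp only [hfdef]
    split_ifs with h1 h2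
    · exact ⟨fun hv => absurd hv (by decide),
        fun hv => absurd ⟨hv, h1⟩ (C.not_and_ab_bc h)⟩
    · exact ⟨fun hv => absurd hv (by decide),
        fun hv => absurd ⟨hv, h2⟩ (C.not_and_ab_ac h)⟩
    · refine ⟨fun _ => ?_, fun _ => rfl⟩
      rcases C.exactly_one h v with ⟨h3,_,_⟩|⟨_,h3,_⟩|⟨_,_,h3⟩
      · exact h3
      · exact absurd h3 h2
      · exact absurd h3 h1
  obtain ⟨c1, c2, c3, -⟩ := C.nb_partition h
  have hcfib : ∀ i : Fin 3, (univ.filter (fun v => f v = i)).card = m := by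
    intro i
    rcases fin3cases i with rfl | rfl | rfl
    · rw [show univ.filter (fun v => f v = 0) = Nb E b c by
        ext v; simp [mem_Nb, hf0 v]]
      exact c3
    · rw [show univ.filter (fun v => f v = 1) = Nb E a c by
        ext v; simp [mem_Nb, hf1 v]]
      exact c2
    · rw [show univ.filter (fun v => f v = 2) = Nb E a b by
        ext v; simp [mem_Nb, hf2 v]]
      exact c1
  have hfne : ∀ u v w, Edg E u v w → f u ≠ f v := by
    intro u v w hedg hfe
    have hcov : Cov E u v := ⟨w, hedg⟩
    have huv : u ≠ v := C.ne12 hedg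
    rcases fin3cases (f u) with h' | h' | h'
    · exact huv (pA u v ((hf0 u).1 h') ((hf0 v).1 (hfe ▸ h')) hcov)
    · exact huv (pB u v ((hf1 u).1 h') ((hf1 v).1 (hfe ▸ h')) hcov)
    · exact huv (pC u v ((hf2 u).1 h') ((hf2 v).1 (hfe ▸ h')) hcov)
  have htrans : ∀ u v w, f u = 0 → f v = 1 → f w = 2 → Edg E u v w := by
    intro u v w hu hv hw
    have hu' : Edg E b c u := (hf0 u).1 hu
    have hv' : Edg E a c v := (hf1 v).1 hv
    have hw' : Edg E a b w := (hf2 w).1 hw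
    have step1 : Edg E u b c := by
      by_cases hau : a = u
      · exact hau ▸ h
      · exact C.subst (fun hc => hau (pA a u h.rot hu' hc)) h
    have step2 : Edg E u v c := by
      by_cases hbv : b = v
      · exact hbv ▸ step1
      · exact (C.subst (fun hc => hbv (pB b v h.s23 hv' hc)) step1.s12).s12
    by_cases hcw : c = w
    · exact hcw ▸ step2
    · exact (C.subst (fun hc => hcw (pC c w h hw' hc)) step2.rot2).rot
  refine ⟨f, ?_, ?_⟩
  · intro i j; rw [hcfib i, hcfib j]; omega
  · intro e
    constructor
    · intro he
      have hc3 := C.hcard e he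
      refine ⟨hc3, ?_⟩
      obtain ⟨x, y, z, hxy, hxz, hyz, rfl⟩ := card_eq_three.1 hc3
      have hedg : Edg E x y z := he
      have himg : ({x,y,z} : Finset (Fin n)).image f = {f x, f y, f z} := by
        simp [Finset.image_insert]
      rw [himg, card_eq_three]
      exact ⟨f x, f y, f z, hfne x y z hedg, hfne x z y hedg.s23,
        hfne y z x hedg.rot, rfl⟩
    · rintro ⟨hc3, himage⟩
      obtain ⟨x, y, z, hxy, hxz, hyz, rfl⟩ := card_eq_three.1 hc3
      have himgu : ({x,y,z} : Finset (Fin n)).image f = univ := by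
        apply eq_univ_of_card
        rw [himage]; rfl
      have hex : ∀ i : Fin 3, ∃ u, u ∈ ({x,y,z} : Finset (Fin n)) ∧ f u = i := by
        intro i
        have : i ∈ ({x,y,z} : Finset (Fin n)).image f := himgu ▸ mem_univ i
        exact Finset.mem_image.1 this
      obtain ⟨u, hu, hu0⟩ := hex 0
      obtain ⟨v, hv, hv1⟩ := hex 1
      obtain ⟨w, hw, hw2⟩ := hex 2
      have hedg : Edg E u v w := htrans u v w hu0 hv1 hw2
      have hsub : ({u,v,w} : Finset (Fin n)) ⊆ {x,y,z} := by
        intro t ht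
        simp only [mem_insert, mem_singleton] at ht
        rcases ht with rfl | rfl | rfl <;> assumption
      have hcard3 : ({u,v,w} : Finset (Fin n)).card = 3 := by
        rw [card_eq_three]
        refine ⟨u, v, w, ?_, ?_, ?_, rfl⟩
        · intro he'; rw [he', hv1] at hu0; exact absurd hu0 (by decide)
        · intro he'; rw [he', hw2] at hu0; exact absurd hu0 (by decide)
        · intro he'; rw [he', hw2] at hv1; exact absurd hv1 (by decide)
      have : ({u,v,w} : Finset (Fin n)) = {x,y,z} :=
        Finset.eq_of_subset_of_card_le hsub (by rw [hcard3, hc3])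
      rw [← this]
      exact hedg


omit C in
lemma star_sub : ∀ k k' : Fin 6, (∀ p, starB k p = true → starB k' p = true) → k' = k := by
  decide

set_option maxHeartbeats 4000000 in
set_option maxRecDepth 20000 in
lemma fromReps {v0 v1 v2 v3 v4 v5 : Fin n} (R : Reps E v0 v1 v2 v3 v4 v5) :
    IsBalancedH6Blowup n E ∧ n % 6 = 0 := by
  classical
  set rr : Fin 6 → Fin n := ![v0,v1,v2,v3,v4,v5] with hrr
  have typing : ∀ z, ∃ k : Fin 6, ∀ p : Fin 15,
      (Edg E (rr (pv p).1) (rr (pv p).2) z ↔ starB k p = true) := by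
    intro z
    set D : Fin 15 → Bool := fun p => decide (Edg E (rr (pv p).1) (rr (pv p).2) z) with hD
    have h1 : exOne (D 0) (D 1) (D 5) = true := exOne_decide (C.exactly_one R.e012 z)
    have h2 : exOne (D 0) (D 2) (D 6) = true := exOne_decide (C.exactly_one R.e013 z)
    have h3 : exOne (D 9) (D 10) (D 12) = true := exOne_decide (C.exactly_one R.e234 z)
    have h4 : exOne (D 9) (D 11) (D 13) = true := exOne_decide (C.exactly_one R.e235 z)
    have h5 : exOne (D 3) (D 4) (D 14) = true := exOne_decide (C.exactly_one R.e045 z)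
    have h6 : exOne (D 7) (D 8) (D 14) = true := exOne_decide (C.exactly_one R.e145 z)
    have h7 : exOne (D 1) (D 3) (D 10) = true := exOne_decide (C.exactly_one R.e024 z)
    have h8 : exOne (D 2) (D 4) (D 13) = true := exOne_decide (C.exactly_one R.e035 z)
    have h9 : exOne (D 5) (D 8) (D 11) = true := exOne_decide (C.exactly_one R.e125 z)
    have h10 : exOne (D 6) (D 7) (D 12) = true := exOne_decide (C.exactly_one R.e134 z)
    obtain ⟨k, hk⟩ := core (D 0) (D 1) (D 2) (D 3) (D 4) (D 5) (D 6) (D 7) (D 8)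
      (D 9) (D 10) (D 11) (D 12) (D 13) (D 14)
      (by rw [h1, h2, h3, h4, h5, h6, h7, h8, h9, h10]; rfl)
    refine ⟨k, fun p => ?_⟩
    have hmk := hk p
    have hDm : (![D 0, D 1, D 2, D 3, D 4, D 5, D 6, D 7, D 8, D 9, D 10, D 11,
        D 12, D 13, D 14] : Fin 15 → Bool) p = D p := by
      fin_cases p <;> rfl
    rw [hDm] at hmk
    rw [← hmk, hD]
    exact (decide_eq_true_iff).symm
  choose f hf using typing
  have hP : ∀ (p : Fin 15) (k : Fin 6), starB k p = true →
      Edg E (rr (pv p).1) (rr (pv p).2) (rr k) := by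
    intro p k
    fin_cases p <;> fin_cases k <;> intro hst <;>
      first
        | exact absurd hst (by decide)
        | exact R.e012 | exact R.e013 | exact R.e234 | exact R.e235 | exact R.e045
        | exact R.e145 | exact R.e024 | exact R.e035 | exact R.e125 | exact R.e134
        | exact R.e012.rot | exact R.e013.rot | exact R.e024.rot | exact R.e035.rot
        | exact R.e045.rot | exact R.e125.rot | exact R.e134.rot | exact R.e145.rot
        | exact R.e234.rot | exact R.e235.rot
        | exact R.e012.s23 | exact R.e013.s23 | exact R.e024.s23 | exact R.e035.s23
        | exact R.e045.s23 | exact R.e125.s23 | exact R.e134.s23 | exact R.e145.s23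
        | exact R.e234.s23 | exact R.e235.s23
  have frk : ∀ k, f (rr k) = k := by
    intro k
    exact star_sub k (f (rr k)) (fun p hst => (hf (rr k) p).1 (hP p k hst))
  have sameType : ∀ x y z : Fin n, f x = f y → Edg E x y z → False := by
    intro x y z hxy he
    by_cases hz : ∃ p, starB (f x) p = true ∧ Edg E (rr (pv p).1) (rr (pv p).2) z
    · obtain ⟨p, hst, hzm⟩ := hz
      exact C.no_edge_in_nb ((hf x p).2 hst) ((hf y p).2 (hxy ▸ hst)) hzm he
    · push_neg at hz
      set P : Fin 6 → Bool := fun l => decide (Edg E x (rr l) z) with hPdef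
      apply c5core (f x) (P 0) (P 1) (P 2) (P 3) (P 4) (P 5)
      intro p hst
      have hPm : ∀ l : Fin 6, (![P 0, P 1, P 2, P 3, P 4, P 5] : Fin 6 → Bool) l = P l := by
        intro l; fin_cases l <;> rfl
      rw [hPm, hPm]
      have hxm : Edg E x (rr (pv p).1) (rr (pv p).2) := ((hf x p).2 hst).rot2
      rcases C.exactly_one hxm z with ⟨g1,g2,_⟩|⟨g1,g2,_⟩|⟨_,_,g3⟩
      · simp only [hPdef]; simp [g1, g2]
      · simp only [hPdef]; simp [g1, g2]
      · exact absurd g3 (hz p hst)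
  have hsim : ∀ (x : Fin n) (k : Fin 6), f x = k → x ≠ rr k → ¬ Cov E x (rr k) := by
    intro x k hfx hne hcov
    obtain ⟨z, hz⟩ := hcov
    exact sameType x (rr k) z (by rw [hfx, frk k]) hz
  have toRep : ∀ x y z : Fin n, Edg E x y z → Edg E (rr (f x)) y z := by
    intro x y z he
    by_cases hx : x = rr (f x)
    · rwa [← hx]
    · exact C.subst (hsim x (f x) rfl hx) he
  have fromRep : ∀ (k : Fin 6) (y z : Fin n), Edg E (rr k) y z →
      ∀ x, f x = k → Edg E x y z := by
    intro k y z he x hfx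
    by_cases hx : x = rr k
    · rwa [hx]
    · exact C.subst (fun hc => hsim x k hfx hx hc.symm) he
  have fwd : ∀ x y z : Fin n, Edg E x y z → ({f x, f y, f z} : Finset (Fin 6)) ∈ H6 := by
    intro x y z he
    have hR1 : Edg E (rr (f x)) y z := toRep x y z he
    have hR2 : Edg E (rr (f y)) z (rr (f x)) := toRep y z (rr (f x)) hR1.rot
    have hR3 : Edg E (rr (f z)) (rr (f x)) (rr (f y)) := toRep z (rr (f x)) (rr (f y)) hR2.rot
    have hR : Edg E (rr (f x)) (rr (f y)) (rr (f z)) := hR3.rot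
    have dxy : f x ≠ f y := fun hq => sameType x y z hq he
    obtain ⟨p, hp⟩ := ptab (f x) (f y) dxy
    have hmem : Edg E (rr (pv p).1) (rr (pv p).2) (rr (f z)) := by
      rcases hp with hp | hp <;> rw [hp]
      · exact hR
      · exact hR.s12
    have hst : starB (f (rr (f z))) p = true := (hf (rr (f z)) p).1 hmem
    rw [frk] at hst
    have hh := (starB_iff _ _).1 hst
    rcases hp with hp | hp <;> rw [hp] at hh
    · simpa using hh
    · rw [tri_comm (f x) (f y) (f z)]
      simpa using hh
  have bwd : ∀ x y z : Fin n, f x ≠ f y → f x ≠ f z → f y ≠ f z →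
      ({f x, f y, f z} : Finset (Fin 6)) ∈ H6 → Edg E x y z := by
    intro x y z dxy dxz dyz hmem
    obtain ⟨p, hp⟩ := ptab (f x) (f y) dxy
    have hst : starB (f z) p = true := by
      rw [starB_iff]
      rcases hp with hp | hp <;> rw [hp]
      · simpa using hmem
      · simpa using ((tri_comm (f x) (f y) (f z)) ▸ hmem)
    have hmem2 : Edg E (rr (pv p).1) (rr (pv p).2) (rr (f z)) := by
      apply (hf (rr (f z)) p).2
      rw [frk]; exact hst
    have hR : Edg E (rr (f x)) (rr (f y)) (rr (f z)) := by
      rcases hp with hp | hp <;> rw [hp] at hmem2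
      · exact hmem2
      · exact hmem2.s12
    have h1 : Edg E x (rr (f y)) (rr (f z)) := fromRep (f x) _ _ hR x rfl
    have h2 : Edg E y (rr (f z)) x := fromRep (f y) _ _ h1.rot y rfl
    have h3 : Edg E z x y := fromRep (f z) _ _ h2.rot z rfl
    exact h3.rot
  have hpaircard : ∀ l l' : Fin 6, l ≠ l' →
      (univ.filter (fun v => f v = l)).card + (univ.filter (fun v => f v = l')).card = m := by
    intro l l' hnell
    have hedge : Edg E (rr (pv (tblIdx l l')).1) (rr (pv (tblIdx l l')).2) (rr l) := by
      apply (hf (rr l) (tblIdx l l')).2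
      rw [frk]
      exact starB_self l l' hnell
    have hcard : (Nb E (rr (pv (tblIdx l l')).1) (rr (pv (tblIdx l l')).2)).card = m :=
      (C.nb_partition hedge).1
    have hdisj : Disjoint (univ.filter (fun v => f v = l)) (univ.filter (fun v => f v = l')) := by
      rw [disjoint_left]
      intro t h1 h2
      simp only [mem_filter] at h1 h2
      exact hnell (h1.2 ▸ h2.2 ▸ rfl)
    have hset : Nb E (rr (pv (tblIdx l l')).1) (rr (pv (tblIdx l l')).2)
        = univ.filter (fun v => f v = l) ∪ univ.filter (fun v => f v = l') := by
      ext z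
      rw [mem_Nb, mem_union]
      simp only [mem_filter, mem_univ, true_and]
      rw [hf z (tblIdx l l')]
      exact tbl_spec l l' (f z) hnell
    rw [← card_union_of_disjoint hdisj, ← hset, hcard]
  have hallEq : ∀ l l' : Fin 6,
      (univ.filter (fun v => f v = l)).card = (univ.filter (fun v => f v = l')).card := by
    intro l l'
    by_cases h : l = l'
    · rw [h]
    · obtain ⟨t, ht1, ht2⟩ := extbl l l'
      have h1 := hpaircard l t (fun he => ht1 he.symm)
      have h2 := hpaircard l' t (fun he => ht2 he.symm)
      omega
  have hsum : n = 6 * (univ.filter (fun v => f v = (0 : Fin 6))).card := by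
    have hfw := Finset.card_eq_sum_card_fiberwise
      (f := f) (s := (univ : Finset (Fin n))) (t := (univ : Finset (Fin 6)))
      (fun x _ => mem_univ (f x))
    rw [card_univ, Fintype.card_fin] at hfw
    refine hfw.trans ?_
    rw [Finset.sum_congr rfl (fun k _ => hallEq k 0), Finset.sum_const, card_univ]
    simp [Fintype.card_fin]
  constructor
  · refine ⟨f, fun i j => hallEq i j, fun e => ?_⟩
    constructor
    · intro he
      have h3 := C.hcard e he
      refine ⟨h3, ?_⟩
      obtain ⟨x, y, z, hxy, hxz, hyz, rfl⟩ := card_eq_three.1 h3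
      have himg : ({x,y,z} : Finset (Fin n)).image f = {f x, f y, f z} := by
        simp [Finset.image_insert]
      rw [himg]
      exact fwd x y z he
    · rintro ⟨h3, hmem⟩
      obtain ⟨x, y, z, hxy, hxz, hyz, rfl⟩ := card_eq_three.1 h3
      have himg : ({x,y,z} : Finset (Fin n)).image f = {f x, f y, f z} := by
        simp [Finset.image_insert]
      rw [himg] at hmem
      obtain ⟨d1, d2, d3⟩ := card3_ne (h6card _ hmem)
      exact bwd x y z d1 d2 d3 hmem
  · rw [hsum]
    exact Nat.mul_mod_right 6 _


lemma caseII {a b c c' : Fin n} (h : Edg E a b c) (h' : Edg E a b c')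
    (hcov : Cov E c c') : IsBalancedH6Blowup n E ∧ n % 6 = 0 := by
  obtain ⟨w, hw⟩ := hcov
  rcases C.exactly_one h w with ⟨h1,_,_⟩|⟨_,h2,_⟩|⟨_,_,h3⟩
  · exact (C.no_edge_in_nb h h' h1 hw).elim
  · obtain ⟨v4, R⟩ := C.caseIIa h.s12 h'.s12 hw h2
    exact C.fromReps R
  · obtain ⟨v4, R⟩ := C.caseIIa h h' hw h3
    exact C.fromReps R

end Ctx

lemma edg_nes (hcard : ∀ e ∈ E, e.card = 3) {x y z : Fin n} (h : Edg E x y z) :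
    x ≠ y ∧ x ≠ z ∧ y ≠ z := card3_ne (hcard _ h)

lemma coDeg_eq_nb (hcard : ∀ e ∈ E, e.card = 3) {x y : Fin n} (hxy : x ≠ y) :
    coDeg E {x,y} = (Nb E x y).card := by
  have hpair : ({x,y} : Finset (Fin n)).card = 2 := by
    rw [card_insert_of_notMem (by simp [hxy]), card_singleton]
  have himg : E.filter (fun e => {x,y} ⊆ e) = (Nb E x y).image (fun z => {x,y,z}) := by
    ext e
    simp only [mem_filter, Finset.mem_image, mem_Nb]
    constructor
    · rintro ⟨he, hsub⟩
      have hsd : (e \ {x,y}).card = 1 := by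
        rw [card_sdiff_of_subset hsub, hcard e he, hpair]
      obtain ⟨z, hz⟩ := card_eq_one.1 hsd
      have hee : e = ({x,y,z} : Finset (Fin n)) := by
        have h1 : {x,y} ∪ (e \ {x,y}) = e := union_sdiff_of_subset hsub
        rw [hz] at h1
        rw [← h1]; ext t; simp
      refine ⟨z, ?_, hee.symm⟩
      show ({x,y,z} : Finset (Fin n)) ∈ E
      rw [← hee]; exact he
    · rintro ⟨z, hz, rfl⟩
      exact ⟨hz, by intro t ht; simp at ht ⊢; tauto⟩
  rw [coDeg, himg, card_image_of_injOn]
  intro z1 h1 z2 h2 heq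
  have heq' : ({x,y,z1} : Finset (Fin n)) = {x,y,z2} := heq
  have hz1 : z1 ∈ ({x,y,z2} : Finset (Fin n)) := by
    rw [← heq']; simp
  obtain ⟨-, e13, e23⟩ := edg_nes hcard (mem_Nb.1 (Finset.mem_coe.1 h1))
  simp only [mem_insert, mem_singleton] at hz1
  rcases hz1 with rfl | rfl | rfl
  · exact absurd rfl e13
  · exact absurd rfl e23
  · rfl

end K4X



/-- Characterization of the extremal `K₄⁻`-free 3-graphs when `3 ∣ n`. -/
theorem K4minus_extremal_structure (n : ℕ) (hn : 3 ≤ n) (hdvd : 3 ∣ n)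
    (E : Finset (Finset (Fin n))) (hcard : ∀ e ∈ E, e.card = 3) (hne : E.Nonempty)
    (hfree : ¬ Contains K4minus E) (hdeg : minPosCoDeg 3 n E = n / 3) :
    (n % 6 = 0 → (IsCompleteBalancedMultipartite n 3 E ∨ IsBalancedH6Blowup n E)) ∧
    (n % 6 = 3 → IsCompleteBalancedMultipartite n 3 E) := by
  classical
  obtain ⟨m, hm⟩ := hdvd
  have hnok4 : ∀ a x y z : Fin n,
      K4X.Edg E a x y → K4X.Edg E a x z → K4X.Edg E a y z → y = z := by
    intro a x y z h1 h2 h3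
    by_contra hyz
    apply hfree
    obtain ⟨dax, day, dxy⟩ := K4X.edg_nes hcard h1
    obtain ⟨-, daz, dxz⟩ := K4X.edg_nes hcard h2
    refine ⟨![a, x, y, z], ?_, ?_⟩
    · intro i j hij
      fin_cases i <;> fin_cases j <;> simp_all
    · intro e he
      simp only [K4minus, mem_insert, mem_singleton] at he
      rcases he with rfl | rfl | rfl
      · have himg : ({0,1,2} : Finset (Fin 4)).image ![a, x, y, z] = {a, x, y} := by
          simp [Finset.image_insert]
        rw [himg]; exact h1
      · have himg : ({0,1,3} : Finset (Fin 4)).image ![a, x, y, z] = {a, x, z} := by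
          simp [Finset.image_insert]
        rw [himg]; exact h2
      · have himg : ({0,2,3} : Finset (Fin 4)).image ![a, x, y, z] = {a, y, z} := by
          simp [Finset.image_insert]
        rw [himg]; exact h3
  have hdel : ∀ x y : Fin n, K4X.Cov E x y → m ≤ (K4X.Nb E x y).card := by
    rintro x y ⟨z, hz⟩
    obtain ⟨hxy, -, -⟩ := K4X.edg_nes hcard hz
    have hmem : coDeg E {x,y} ∈
        {d : ℕ | ∃ S : Finset (Fin n), S.card = 3 - 1 ∧ coDeg E S = d ∧ 0 < d} := by
      refine ⟨{x,y}, ?_, rfl, ?_⟩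
      · rw [card_insert_of_notMem (by simp [hxy]), card_singleton]
      · apply card_pos.2
        refine ⟨{x,y,z}, mem_filter.2 ⟨hz, ?_⟩⟩
        intro t ht; simp at ht ⊢; tauto
    have hle : minPosCoDeg 3 n E ≤ coDeg E {x,y} := Nat.sInf_le hmem
    rw [hdeg] at hle
    rw [K4X.coDeg_eq_nb hcard hxy] at hle
    omega
  have C : K4X.Ctx E m := ⟨hcard, hnok4, hdel, hm⟩
  obtain ⟨e0, he0⟩ := hne
  obtain ⟨a, b, c0, d1, d2, d3, rfl⟩ := card_eq_three.1 (hcard _ he0)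
  have habc : K4X.Edg E a b c0 := he0
  by_cases HA : ∀ x y, K4X.Edg E b c0 x → K4X.Edg E b c0 y → K4X.Cov E x y → x = y
  · by_cases HB : ∀ x y, K4X.Edg E a c0 x → K4X.Edg E a c0 y → K4X.Cov E x y → x = y
    · by_cases HC : ∀ x y, K4X.Edg E a b x → K4X.Edg E a b y → K4X.Cov E x y → x = y
      · have h3p := C.caseI habc HA HB HC
        exact ⟨fun _ => Or.inl h3p, fun _ => h3p⟩
      · push_neg at HC
        obtain ⟨x, y, hx, hy, hcov, hxyne⟩ := HC
        have hblow := C.caseII hx hy hcov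
        exact ⟨fun _ => Or.inr hblow.1, fun h3 => absurd hblow.2 (by omega)⟩
    · push_neg at HB
      obtain ⟨x, y, hx, hy, hcov, hxyne⟩ := HB
      have hblow := C.caseII hx hy hcov
      exact ⟨fun _ => Or.inr hblow.1, fun h3 => absurd hblow.2 (by omega)⟩
  · push_neg at HA
    obtain ⟨x, y, hx, hy, hcov, hxyne⟩ := HA
    have hblow := C.caseII hx hy hcov
    exact ⟨fun _ => Or.inr hblow.1, fun h3 => absurd hblow.2 (by omega)⟩
end

section
/- For every integer n ≥ 3, every F₃,₂-free 3-graph H on n vertices with at least one edge satisfies δ₂⁺(H) ≤ n/2; in particular co⁺ex(n, F₃,₂) ≤ n/2. -/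
open Finset

-- link of a pair
def link32 {n : ℕ} (E : Finset (Finset (Fin n))) (y z : Fin n) : Finset (Fin n) :=
  univ.filter (fun v => ({y, z, v} : Finset (Fin n)) ∈ E)

lemma edge_distinct {n : ℕ} {E : Finset (Finset (Fin n))} (h3 : ∀ e ∈ E, e.card = 3)
    {a b c : Fin n} (h : ({a,b,c} : Finset (Fin n)) ∈ E) : a ≠ b ∧ a ≠ c ∧ b ≠ c := by
  have hc := h3 _ h
  refine ⟨?_, ?_, ?_⟩ <;> rintro rfl
  · have hh : ({a,a,c} : Finset (Fin n)) = {a,c} := by ext t; simp only [Finset.mem_insert, Finset.mem_singleton]; tauto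
    rw [hh] at hc
    have := Finset.card_insert_le a ({c} : Finset (Fin n))
    simp at this; omega
  · have hh : ({a,b,a} : Finset (Fin n)) = {a,b} := by ext t; simp only [Finset.mem_insert, Finset.mem_singleton]; tauto
    rw [hh] at hc
    have := Finset.card_insert_le a ({b} : Finset (Fin n))
    simp at this; omega
  · have hh : ({a,b,b} : Finset (Fin n)) = {a,b} := by ext t; simp only [Finset.mem_insert, Finset.mem_singleton]; tauto
    rw [hh] at hc
    have := Finset.card_insert_le a ({b} : Finset (Fin n))
    simp at this; omega

lemma coDeg_le_link32 {n : ℕ} {E : Finset (Finset (Fin n))} (h3 : ∀ e ∈ E, e.card = 3)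
    {y z : Fin n} (hyz : y ≠ z) : coDeg E {y,z} ≤ (link32 E y z).card := by
  apply Finset.card_le_card_of_surjOn (fun v => ({y,z,v} : Finset (Fin n)))
  intro e he
  simp only [Finset.coe_filter, Set.mem_setOf_eq, Finset.mem_coe, coDeg] at he
  obtain ⟨heE, hsub⟩ := he
  have hc3 := h3 e heE
  have hcs : ({y,z} : Finset (Fin n)).card = 2 := Finset.card_pair hyz
  have h1 : (e \ {y,z}).card = 1 := by rw [Finset.card_sdiff_of_subset hsub, hc3, hcs]
  obtain ⟨v, hv⟩ := Finset.card_eq_one.mp h1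
  have hev : e = {y, z, v} := by
    have h2 := Finset.union_sdiff_of_subset hsub
    rw [hv] at h2
    rw [← h2]; ext t; simp only [Finset.mem_union, Finset.mem_insert, Finset.mem_singleton]; tauto
  exact ⟨v, by simp [link32, ← hev, heE], hev.symm⟩

lemma mem_link32 {n : ℕ} {E : Finset (Finset (Fin n))} {y z v : Fin n} :
    v ∈ link32 E y z ↔ ({y,z,v} : Finset (Fin n)) ∈ E := by simp [link32]


set_option maxHeartbeats 1000000 in
/-- Every `F₃,₂`-free 3-graph on `n ≥ 3` vertices with at least one edge has minimum
positive co-degree at most `n/2`; in particular `co⁺ex(n, F₃,₂) ≤ n/2`. -/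
theorem coPlusEx_F32_upper (n : ℕ) (hn : 3 ≤ n) :
    (∀ E : Finset (Finset (Fin n)), (∀ e ∈ E, e.card = 3) → E.Nonempty →
      ¬ Contains F32 E → (minPosCoDeg 3 n E : ℝ) ≤ n / 2) ∧
    (coPlusEx 3 n F32 : ℝ) ≤ n / 2 := by
  have main1 : ∀ E : Finset (Finset (Fin n)), (∀ e ∈ E, e.card = 3) → E.Nonempty →
      ¬ Contains F32 E → 2 * minPosCoDeg 3 n E ≤ n := by
    intro E h3 ⟨e₀, he₀⟩ hnc
    by_contra hcon
    push_neg at hcon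
    set δ := minPosCoDeg 3 n E with hδdef
    -- every positive pair has link of size ≥ δ
    have hlink : ∀ y z : Fin n, y ≠ z → (link32 E y z).Nonempty →
        δ ≤ (link32 E y z).card := by
      intro y z hyz ⟨w, hw⟩
      have hpos : 0 < coDeg E {y,z} := by
        rw [mem_link32] at hw
        apply Finset.card_pos.mpr
        exact ⟨{y,z,w}, Finset.mem_filter.mpr ⟨hw, by intro a ha; simp at ha; rcases ha with rfl|rfl <;> simp⟩⟩
      exact le_trans (Nat.sInf_le ⟨{y,z}, Finset.card_pair hyz, rfl, hpos⟩)
        (coDeg_le_link32 h3 hyz)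
    -- intersections of two positive links are nonempty
    have hinter : ∀ y z y' z' : Fin n, y ≠ z → y' ≠ z' →
        (link32 E y z).Nonempty → (link32 E y' z').Nonempty →
        (link32 E y z ∩ link32 E y' z').Nonempty := by
      intro y z y' z' h1 h2 hA hB
      have hA' := hlink y z h1 hA
      have hB' := hlink y' z' h2 hB
      have hu := Finset.card_union_add_card_inter (link32 E y z) (link32 E y' z')
      have hun : (link32 E y z ∪ link32 E y' z').card ≤ n := by
        have := Finset.card_le_univ (link32 E y z ∪ link32 E y' z')
        simpa using this
      apply Finset.card_pos.mp; omega
    -- get an edge {x,y,z}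
    obtain ⟨x, y, z, hxy, hxz, hyz, he⟩ := Finset.card_eq_three.mp (h3 e₀ he₀)
    subst he
    have hxA : x ∈ link32 E y z := by
      rw [mem_link32]
      have : ({y,z,x} : Finset (Fin n)) = {x,y,z} := by ext t; simp only [Finset.mem_insert, Finset.mem_singleton]; tauto
      rw [this]; exact he₀
    have hAne : (link32 E y z).Nonempty := ⟨x, hxA⟩
    have hxyne : (link32 E x y).Nonempty := by
      refine ⟨z, ?_⟩; rw [mem_link32]; exact he₀
    obtain ⟨w, hw⟩ := hinter x y y z hxy hyz hxyne hAne
    rw [Finset.mem_inter] at hw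
    obtain ⟨hw1, hw2⟩ := hw
    rw [mem_link32] at hw1
    -- {x,y,w} ∈ E (as {x,y,w} = insert x (insert y {w}))
    have hxw : x ≠ w := (edge_distinct h3 hw1).2.1
    have hxwne : (link32 E x w).Nonempty := by
      refine ⟨y, ?_⟩; rw [mem_link32]
      have : ({x,w,y} : Finset (Fin n)) = {x,y,w} := by ext t; simp only [Finset.mem_insert, Finset.mem_singleton]; tauto
      rw [this]; exact hw1
    obtain ⟨v, hv⟩ := hinter x w y z hxw hyz hxwne hAne
    rw [Finset.mem_inter] at hv
    obtain ⟨hv1, hv2⟩ := hv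
    rw [mem_link32] at hv1 hw2 hv2
    -- hv1 : {x,w,v} ∈ E, hw2 : {y,z,w} ∈ E, hv2 : {y,z,v} ∈ E, also {y,z,x} ∈ E
    have hxE : ({y,z,x} : Finset (Fin n)) ∈ E := mem_link32.mp hxA
    obtain ⟨d1, d2, d3⟩ := edge_distinct h3 hv1   -- x≠w, x≠v, w≠v
    obtain ⟨_, e2, e3⟩ := edge_distinct h3 hxE    -- y≠z, y≠x, z≠x
    obtain ⟨_, f2, f3⟩ := edge_distinct h3 hw2    -- y≠w, z≠w
    obtain ⟨_, g2, g3⟩ := edge_distinct h3 hv2    -- y≠v, z≠v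
    apply hnc
    refine ⟨![x, w, v, y, z], ?_, ?_⟩
    · intro a b hab
      fin_cases a <;> fin_cases b <;> simp_all
    · intro e he
      simp only [F32, Finset.mem_insert, Finset.mem_singleton] at he
      rcases he with rfl|rfl|rfl|rfl
      · have himg : (({0,1,2} : Finset (Fin 5)).image ![x,w,v,y,z]) = {x,w,v} := by
          simp [Finset.image_insert]
        rw [himg]; exact hv1
      · have himg : (({0,3,4} : Finset (Fin 5)).image ![x,w,v,y,z]) = {y,z,x} := by
          simp [Finset.image_insert]
          ext t; simp only [Finset.mem_insert, Finset.mem_singleton]; tauto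
        rw [himg]; exact hxE
      · have himg : (({1,3,4} : Finset (Fin 5)).image ![x,w,v,y,z]) = {y,z,w} := by
          simp [Finset.image_insert]
          ext t; simp only [Finset.mem_insert, Finset.mem_singleton]; tauto
        rw [himg]; exact hw2
      · have himg : (({2,3,4} : Finset (Fin 5)).image ![x,w,v,y,z]) = {y,z,v} := by
          simp [Finset.image_insert]
          ext t; simp only [Finset.mem_insert, Finset.mem_singleton]; tauto
        rw [himg]; exact hv2
  constructor
  · intro E h3 hne hnc
    have h := main1 E h3 hne hnc
    rw [le_div_iff₀ (by norm_num : (0:ℝ) < 2)]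
    have : (minPosCoDeg 3 n E) * 2 ≤ n := by omega
    exact_mod_cast this
  · have hub : coPlusEx 3 n F32 ≤ n / 2 := by
      apply csSup_le'
      rintro d ⟨E, h3, hne, hnc, rfl⟩
      have h := main1 E h3 hne hnc
      omega
    have h2 : (coPlusEx 3 n F32) * 2 ≤ n := by omega
    rw [le_div_iff₀ (by norm_num : (0:ℝ) < 2)]
    exact_mod_cast h2
end

section
/- Let H be an F₃,₂-free 3-graph on n vertices with at least one edge such that 2·δ₂⁺(H) = n. Then n is divisible by 4 and H is isomorphic to the complete balanced 4-partite 3-graph on n vertices. -/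
open Finset

namespace F32Proof

section Perm
variable {α : Type*} [DecidableEq α]

lemma t132 (x y z : α) : ({x,y,z} : Finset α) = {x,z,y} := by
  ext w; simp only [mem_insert, mem_singleton]; tauto
lemma t213 (x y z : α) : ({x,y,z} : Finset α) = {y,x,z} := by
  ext w; simp only [mem_insert, mem_singleton]; tauto
lemma t231 (x y z : α) : ({x,y,z} : Finset α) = {y,z,x} := by
  ext w; simp only [mem_insert, mem_singleton]; tauto
lemma t312 (x y z : α) : ({x,y,z} : Finset α) = {z,x,y} := by
  ext w; simp only [mem_insert, mem_singleton]; tauto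
lemma t321 (x y z : α) : ({x,y,z} : Finset α) = {z,y,x} := by
  ext w; simp only [mem_insert, mem_singleton]; tauto

lemma card3_ne {x y z : α} (h : ({x,y,z} : Finset α).card = 3) :
    x ≠ y ∧ x ≠ z ∧ y ≠ z := by
  refine ⟨fun hxy => ?_, fun hxz => ?_, fun hyz => ?_⟩
  · rw [show ({x,y,z} : Finset α) = {y,z} by
      rw [hxy]; ext w; simp only [mem_insert, mem_singleton]; tauto] at h
    have := card_insert_le y ({z} : Finset α); simp at this; omega
  · rw [show ({x,y,z} : Finset α) = {z,y} by
      rw [hxz]; ext w; simp only [mem_insert, mem_singleton]; tauto] at h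
    have := card_insert_le z ({y} : Finset α); simp at this; omega
  · rw [show ({x,y,z} : Finset α) = {x,z} by
      rw [hyz]; ext w; simp only [mem_insert, mem_singleton]; tauto] at h
    have := card_insert_le x ({z} : Finset α); simp at this; omega

lemma card3_of_ne {x y z : α} (h1 : x ≠ y) (h2 : x ≠ z) (h3 : y ≠ z) :
    ({x,y,z} : Finset α).card = 3 := by
  rw [card_insert_of_notMem (by simp [h1,h2]), card_pair h3]

lemma exists_third {E : Finset (Finset α)} {e : Finset α} {x y : α}
    (hcard : ∀ e ∈ E, e.card = 3) (he : e ∈ E) (hx : x ∈ e) (hy : y ∈ e) (hxy : x ≠ y) :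
    ∃ z, e = {x,y,z} ∧ z ≠ x ∧ z ≠ y := by
  have h3 := hcard e he
  have hsub : ({x,y} : Finset α) ⊆ e := by
    intro w hw; rcases mem_insert.mp hw with rfl | hw
    · exact hx
    · rw [mem_singleton.mp hw]; exact hy
  have h1 : (e \ {x,y}).card = 1 := by
    rw [card_sdiff_of_subset hsub, card_pair hxy, h3]
  obtain ⟨z, hz⟩ := card_eq_one.mp h1
  have hzmem : z ∈ e \ ({x,y} : Finset α) := by rw [hz]; exact mem_singleton_self z
  have hzx : z ≠ x := by
    intro h; subst h; simp at hzmem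
  have hzy : z ≠ y := by
    intro h; subst h; simp at hzmem
  refine ⟨z, ?_, hzx, hzy⟩
  have hu := union_sdiff_of_subset hsub
  rw [hz] at hu
  rw [← hu]; ext w; simp only [mem_union, mem_insert, mem_singleton]; tauto

end Perm

section Core
variable {n : ℕ}

def nbr (E : Finset (Finset (Fin n))) (x y : Fin n) : Finset (Fin n) :=
  univ.filter (fun v => ({x, y, v} : Finset (Fin n)) ∈ E ∧ v ≠ x ∧ v ≠ y)

lemma mem_nbr {E : Finset (Finset (Fin n))} {x y v : Fin n} :
    v ∈ nbr E x y ↔ ({x,y,v} : Finset (Fin n)) ∈ E ∧ v ≠ x ∧ v ≠ y := by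
  simp [nbr]

lemma nbr_comm (E : Finset (Finset (Fin n))) (x y : Fin n) :
    nbr E x y = nbr E y x := by
  ext v; rw [mem_nbr, mem_nbr, t213 x y v]; tauto

lemma self_not_mem_nbr (E : Finset (Finset (Fin n))) (x y : Fin n) : x ∉ nbr E x y := by
  rw [mem_nbr]; tauto

lemma coDeg_pair {E : Finset (Finset (Fin n))} {x y : Fin n}
    (hcard : ∀ e ∈ E, e.card = 3) (hxy : x ≠ y) :
    coDeg E {x,y} = (nbr E x y).card := by
  unfold coDeg
  rw [show E.filter (fun e => ({x,y} : Finset (Fin n)) ⊆ e)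
       = (nbr E x y).image (fun v => ({x,y,v} : Finset (Fin n))) from ?_]
  · rw [card_image_of_injOn ?_]
    intro v hv w hw hvw
    have hv' := mem_nbr.mp hv
    have heq : ({x,y,v} : Finset (Fin n)) = {x,y,w} := hvw
    have : v ∈ ({x,y,w} : Finset (Fin n)) := by
      rw [← heq]; simp
    simp only [mem_insert, mem_singleton] at this
    rcases this with h|h|h
    · exact absurd h hv'.2.1
    · exact absurd h hv'.2.2
    · exact h
  · ext e
    simp only [mem_filter, mem_image]
    constructor
    · rintro ⟨he, hsub⟩
      have hx : x ∈ e := hsub (by simp)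
      have hy : y ∈ e := hsub (by simp)
      obtain ⟨z, hez, hzx, hzy⟩ := exists_third hcard he hx hy hxy
      refine ⟨z, mem_nbr.mpr ⟨hez ▸ he, hzx, hzy⟩, hez.symm⟩
    · rintro ⟨v, hv, rfl⟩
      refine ⟨(mem_nbr.mp hv).1, ?_⟩
      intro w hw; simp only [mem_insert, mem_singleton] at hw
      rcases hw with rfl|rfl <;> simp

lemma delta_le {E : Finset (Finset (Fin n))} {x y z : Fin n}
    (hcard : ∀ e ∈ E, e.card = 3) (h : ({x,y,z} : Finset (Fin n)) ∈ E) :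
    minPosCoDeg 3 n E ≤ (nbr E x y).card := by
  obtain ⟨hxy, hxz, hyz⟩ := card3_ne (hcard _ h)
  apply Nat.sInf_le
  have hz : z ∈ nbr E x y := mem_nbr.mpr ⟨h, hxz.symm, hyz.symm⟩
  exact ⟨{x,y}, by rw [card_pair hxy], coDeg_pair hcard hxy,
    card_pos.mpr ⟨z, hz⟩⟩

lemma free_aux {E : Finset (Finset (Fin n))} {d e p q r : Fin n}
    (hcard : ∀ e ∈ E, e.card = 3) (hfree : ¬ Contains F32 E) (hde : d ≠ e)
    (hpqr : ({p,q,r} : Finset (Fin n)) ∈ E)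
    (hp : p ∈ nbr E d e) (hq : q ∈ nbr E d e) (hr : r ∈ nbr E d e) : False := by
  obtain ⟨hpq, hpr, hqr⟩ := card3_ne (hcard _ hpqr)
  obtain ⟨hpE, hpd, hpe⟩ := mem_nbr.mp hp
  obtain ⟨hqE, hqd, hqe⟩ := mem_nbr.mp hq
  obtain ⟨hrE, hrd, hre⟩ := mem_nbr.mp hr
  apply hfree
  refine ⟨([p,q,r,d,e] : List (Fin n)).get, ?_, ?_⟩
  · rw [← List.nodup_iff_injective_get]
    simp [hpq, hpr, hpd, hpe, hqr, hqd, hqe, hrd, hre, hde, List.nodup_cons]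
  · intro s hs
    simp only [F32, mem_insert, mem_singleton] at hs
    have g0 : ([p,q,r,d,e] : List (Fin n)).get (0 : Fin 5) = p := rfl
    have g1 : ([p,q,r,d,e] : List (Fin n)).get (1 : Fin 5) = q := rfl
    have g2 : ([p,q,r,d,e] : List (Fin n)).get (2 : Fin 5) = r := rfl
    have g3 : ([p,q,r,d,e] : List (Fin n)).get (3 : Fin 5) = d := rfl
    have g4 : ([p,q,r,d,e] : List (Fin n)).get (4 : Fin 5) = e := rfl
    rcases hs with rfl|rfl|rfl|rfl <;>
      simp only [image_insert, image_singleton, g0, g1, g2, g3, g4]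
    · exact hpqr
    · rw [t312 d e p] at hpE; exact hpE
    · rw [t312 d e q] at hqE; exact hqE
    · rw [t312 d e r] at hrE; exact hrE


lemma compl_of {S T : Finset (Fin n)} (hd : Disjoint S T) (hu : S ∪ T = univ) :
    T = univ \ S := by
  ext v
  simp only [mem_sdiff, mem_univ, true_and]
  constructor
  · intro hv; exact fun hs => (disjoint_right.mp hd) hv hs
  · intro hv
    have : v ∈ S ∪ T := hu ▸ mem_univ v
    rcases mem_union.mp this with h|h
    · exact absurd h hv
    · exact h

lemma compl_compl' (S : Finset (Fin n)) : univ \ (univ \ S) = S := by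
  rw [sdiff_sdiff_self_left, univ_inter]

lemma compl_inj {S T : Finset (Fin n)} (h : univ \ S = univ \ T) : S = T := by
  rw [← compl_compl' S, h, compl_compl']

lemma halves (hn2 : 2 * minPosCoDeg 3 n E' = n) {S T : Finset (Fin n)}
    (hS : minPosCoDeg 3 n E' ≤ S.card) (hT : minPosCoDeg 3 n E' ≤ T.card)
    (hd : Disjoint S T) :
    S.card = minPosCoDeg 3 n E' ∧ T.card = minPosCoDeg 3 n E' ∧ S ∪ T = univ := by
  have h1 : (S ∪ T).card = S.card + T.card := card_union_of_disjoint hd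
  have h2 : (S ∪ T).card ≤ n := by
    have := card_le_card (subset_univ (S ∪ T))
    rwa [card_univ, Fintype.card_fin] at this
  have h3 : S ∪ T = univ := eq_univ_of_card _ (by rw [Fintype.card_fin]; omega)
  have h4 : (S ∪ T).card = n := by rw [h3, card_univ, Fintype.card_fin]
  exact ⟨by omega, by omega, h3⟩

variable {E : Finset (Finset (Fin n))}

lemma K (hcard : ∀ e ∈ E, e.card = 3) (hfree : ¬ Contains F32 E)
    (hn2 : 2 * minPosCoDeg 3 n E = n) {a b c w : Fin n}
    (habc : ({a,b,c} : Finset (Fin n)) ∈ E)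
    (hw1 : w ∈ nbr E b c) (hw2 : w ∈ nbr E a c) :
    nbr E w c = univ \ nbr E a b ∧ nbr E a b = univ \ nbr E w c ∧
    (nbr E a b).card = minPosCoDeg 3 n E ∧
    (nbr E w c).card = minPosCoDeg 3 n E ∧ w ∈ nbr E a b := by
  obtain ⟨hab, hac, hbc⟩ := card3_ne (hcard _ habc)
  obtain ⟨hbcw, hwb, hwc⟩ := mem_nbr.mp hw1
  obtain ⟨hacw, hwa, _⟩ := mem_nbr.mp hw2
  have hwca : ({w,c,a} : Finset (Fin n)) ∈ E := by rw [t321 w c a]; exact hacw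
  have hwcb : ({w,c,b} : Finset (Fin n)) ∈ E := by rw [t321 w c b]; exact hbcw
  have hdisj : Disjoint (nbr E a b) (nbr E w c) := by
    rw [disjoint_left]
    intro u hu1 hu2
    obtain ⟨habu, hua, hub⟩ := mem_nbr.mp hu1
    refine free_aux hcard hfree hwc habu ?_ ?_ hu2
    · exact mem_nbr.mpr ⟨hwca, hwa.symm, hac⟩
    · exact mem_nbr.mpr ⟨hwcb, hwb.symm, hbc⟩
  have h1 : minPosCoDeg 3 n E ≤ (nbr E a b).card := delta_le hcard habc
  have h2 : minPosCoDeg 3 n E ≤ (nbr E w c).card := delta_le hcard hwca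
  obtain ⟨hc1, hc2, huniv⟩ := halves hn2 h1 h2 hdisj
  have e1 : nbr E w c = univ \ nbr E a b := compl_of hdisj huniv
  have e2 : nbr E a b = univ \ nbr E w c := by
    rw [e1, compl_compl']
  refine ⟨e1, e2, hc1, hc2, ?_⟩
  rw [e2, mem_sdiff]
  exact ⟨mem_univ w, self_not_mem_nbr E w c⟩

lemma inter_nonempty (hcard : ∀ e ∈ E, e.card = 3)
    (hn2 : 2 * minPosCoDeg 3 n E = n) {a b c : Fin n}
    (habc : ({a,b,c} : Finset (Fin n)) ∈ E) :
    (nbr E b c ∩ nbr E a c).Nonempty := by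
  obtain ⟨hab, hac, hbc⟩ := card3_ne (hcard _ habc)
  rw [nonempty_iff_ne_empty]
  intro h
  have hd : Disjoint (nbr E b c) (nbr E a c) := disjoint_iff_inter_eq_empty.mpr h
  have h1 : minPosCoDeg 3 n E ≤ (nbr E b c).card := by
    apply delta_le hcard (z := a); rw [← t231 a b c]; exact habc
  have h2 : minPosCoDeg 3 n E ≤ (nbr E a c).card := by
    apply delta_le hcard (z := b); rw [← t132 a b c]; exact habc
  obtain ⟨_, _, huniv⟩ := halves hn2 h1 h2 hd
  have : c ∈ nbr E b c ∪ nbr E a c := huniv ▸ mem_univ c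
  rcases mem_union.mp this with h'|h' <;>
    exact (mem_nbr.mp h').2.2 rfl

lemma card_nbr_eq (hcard : ∀ e ∈ E, e.card = 3) (hfree : ¬ Contains F32 E)
    (hn2 : 2 * minPosCoDeg 3 n E = n) {x y z : Fin n}
    (h : ({x,y,z} : Finset (Fin n)) ∈ E) :
    (nbr E x y).card = minPosCoDeg 3 n E := by
  obtain ⟨w, hw⟩ := inter_nonempty hcard hn2 h
  obtain ⟨hw1, hw2⟩ := mem_inter.mp hw
  exact (K hcard hfree hn2 h hw1 hw2).2.2.1

lemma mem_third (hcard : ∀ e ∈ E, e.card = 3) (hfree : ¬ Contains F32 E)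
    (hn2 : 2 * minPosCoDeg 3 n E = n) {x y z w : Fin n}
    (h : ({x,y,z} : Finset (Fin n)) ∈ E)
    (h1 : w ∈ nbr E y z) (h2 : w ∈ nbr E x z) : w ∈ nbr E x y :=
  (K hcard hfree hn2 h h1 h2).2.2.2.2

lemma delta_le_two_inter (hcard : ∀ e ∈ E, e.card = 3) (hfree : ¬ Contains F32 E)
    (hn2 : 2 * minPosCoDeg 3 n E = n) {x y z : Fin n}
    (h : ({x,y,z} : Finset (Fin n)) ∈ E) :
    minPosCoDeg 3 n E ≤ 2 * (nbr E y z ∩ nbr E x z).card := by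
  set δ := minPosCoDeg 3 n E with hδ
  have hyzx : ({y,z,x} : Finset (Fin n)) ∈ E := by rw [← t231 x y z]; exact h
  have hxzy : ({x,z,y} : Finset (Fin n)) ∈ E := by rw [← t132 x y z]; exact h
  have hACB : ∀ u, u ∈ nbr E y z → u ∈ nbr E x y → u ∈ nbr E x z := by
    intro u hu1 hu2
    have := mem_third hcard hfree hn2 hxzy (by rwa [nbr_comm]) hu2
    exact this
  have hBCA : ∀ u, u ∈ nbr E x z → u ∈ nbr E x y → u ∈ nbr E y z := by
    intro u hu1 hu2
    exact mem_third hcard hfree hn2 hyzx (by rwa [nbr_comm]) (by rwa [nbr_comm])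
  have hA : (nbr E y z).card = δ := card_nbr_eq hcard hfree hn2 hyzx
  have hB : (nbr E x z).card = δ := card_nbr_eq hcard hfree hn2 hxzy
  have hC : (nbr E x y).card = δ := card_nbr_eq hcard hfree hn2 h
  set A := nbr E y z
  set B := nbr E x z
  set C := nbr E x y
  set D := A ∩ B with hD
  have hsub : (A \ D) ∪ (B \ D) ⊆ univ \ C := by
    intro v hv
    rw [mem_sdiff]
    refine ⟨mem_univ v, ?_⟩
    rcases mem_union.mp hv with hv'|hv' <;> obtain ⟨hv1, hv2⟩ := mem_sdiff.mp hv'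
    · exact fun hvc => hv2 (mem_inter.mpr ⟨hv1, hACB v hv1 hvc⟩)
    · exact fun hvc => hv2 (mem_inter.mpr ⟨hBCA v hv1 hvc, hv1⟩)
  have hdisj : Disjoint (A \ D) (B \ D) := by
    rw [disjoint_left]
    intro v hv1 hv2
    exact (mem_sdiff.mp hv1).2 (mem_inter.mpr ⟨(mem_sdiff.mp hv1).1, (mem_sdiff.mp hv2).1⟩)
  have hcardle : (A \ D).card + (B \ D).card ≤ (univ \ C).card := by
    rw [← card_union_of_disjoint hdisj]; exact card_le_card hsub
  have hDA : D ⊆ A := inter_subset_left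
  have hDB : D ⊆ B := inter_subset_right
  have hDcard : D.card ≤ δ := hA ▸ card_le_card hDA
  rw [card_sdiff_of_subset hDA, card_sdiff_of_subset hDB, hA, hB,
      card_sdiff_of_subset (subset_univ C), card_univ, Fintype.card_fin, hC] at hcardle
  omega

end Core
end F32Proof

open F32Proof in
/-- An `F₃,₂`-free 3-graph on `n` vertices with at least one edge and minimum positive
co-degree exactly `n/2` exists only when `4 ∣ n`, and it must be the complete balanced
4-partite 3-graph. -/
theorem F32_extremal_structure (n : ℕ) (E : Finset (Finset (Fin n)))
    (hcard : ∀ e ∈ E, e.card = 3) (hne : E.Nonempty) (hfree : ¬ Contains F32 E)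
    (hdeg : 2 * minPosCoDeg 3 n E = n) :
    4 ∣ n ∧ IsCompleteBalancedMultipartite n 4 E := by
  classical
  obtain ⟨e0, he0⟩ := hne
  set δ := minPosCoDeg 3 n E with hδdef
  have hn2 : 2 * δ = n := hdeg
  obtain ⟨a, b, c, hab, hac, hbc, he0eq⟩ := Finset.card_eq_three.mp (hcard e0 he0)
  have habc : ({a,b,c} : Finset (Fin n)) ∈ E := he0eq ▸ he0
  have hbca : ({b,c,a} : Finset (Fin n)) ∈ E := by rw [← t231 a b c]; exact habc
  have hacb : ({a,c,b} : Finset (Fin n)) ∈ E := by rw [← t132 a b c]; exact habc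
  set A := nbr E b c with hAdef
  set B := nbr E a c with hBdef
  set C := nbr E a b with hCdef
  set D := A ∩ B with hDdef
  have hDA : D ⊆ A := inter_subset_left
  have hDB : D ⊆ B := inter_subset_right
  have hA : A.card = δ := card_nbr_eq hcard hfree hn2 hbca
  have hB : B.card = δ := card_nbr_eq hcard hfree hn2 hacb
  have hC : C.card = δ := card_nbr_eq hcard hfree hn2 habc
  have hDC : D ⊆ C := fun w hw =>
    mem_third hcard hfree hn2 habc (mem_inter.mp hw).1 (mem_inter.mp hw).2
  have hACB : A ∩ C ⊆ B := by
    intro u hu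
    obtain ⟨huA, huC⟩ := mem_inter.mp hu
    exact mem_third hcard hfree hn2 hacb (by rw [nbr_comm E c b]; exact huA) huC
  have hBCA : B ∩ C ⊆ A := by
    intro u hu
    obtain ⟨huB, huC⟩ := mem_inter.mp hu
    exact mem_third hcard hfree hn2 hbca (by rw [nbr_comm E c a]; exact huB)
      (by rw [nbr_comm E b a]; exact huC)
  have hAC : A ∩ C = D := by
    apply subset_antisymm
    · intro u hu
      exact mem_inter.mpr ⟨(mem_inter.mp hu).1, hACB hu⟩
    · intro u hu
      exact mem_inter.mpr ⟨hDA hu, hDC hu⟩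
  have hBC : B ∩ C = D := by
    apply subset_antisymm
    · intro u hu
      exact mem_inter.mpr ⟨hBCA hu, (mem_inter.mp hu).1⟩
    · intro u hu
      exact mem_inter.mpr ⟨hDB hu, hDC hu⟩
  obtain ⟨w0, hw0D⟩ : D.Nonempty := inter_nonempty hcard hn2 habc
  have hw0A : w0 ∈ A := hDA hw0D
  have hw0B : w0 ∈ B := hDB hw0D
  have hw0C : w0 ∈ C := hDC hw0D
  -- neighborhoods of pairs (v, base vertex) for v ∈ D
  have hi : ∀ v ∈ D, nbr E v a = univ \ A ∧ nbr E v b = univ \ B ∧ nbr E v c = univ \ C := by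
    intro v hv
    have hvA : v ∈ A := hDA hv
    have hvB : v ∈ B := hDB hv
    have hvC : v ∈ C := hDC hv
    refine ⟨?_, ?_, ?_⟩
    · have h1 : v ∈ nbr E c a := by rw [nbr_comm E c a]; exact hvB
      have h2 : v ∈ nbr E b a := by rw [nbr_comm E b a]; exact hvC
      exact (K hcard hfree hn2 hbca h1 h2).1
    · have hcab : ({c,a,b} : Finset (Fin n)) ∈ E := by rw [← t312 a b c]; exact habc
      have h1 : v ∈ nbr E a b := hvC
      have h2 : v ∈ nbr E c b := by rw [nbr_comm E c b]; exact hvA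
      have h3 := (K hcard hfree hn2 hcab h1 h2).1
      rw [nbr_comm E c a] at h3
      exact h3
    · exact (K hcard hfree hn2 habc hvA hvB).1
  -- size of D
  have hlow : δ ≤ 2 * D.card := delta_le_two_inter hcard hfree hn2 habc
  have habw0 : ({a,b,w0} : Finset (Fin n)) ∈ E := (mem_nbr.mp hw0C).1
  have hupper : δ ≤ 2 * (nbr E b w0 ∩ nbr E a w0).card :=
    delta_le_two_inter hcard hfree hn2 habw0
  have hD'C : nbr E b w0 ∩ nbr E a w0 ⊆ C := by
    intro u hu
    exact mem_third hcard hfree hn2 habw0 (mem_inter.mp hu).1 (mem_inter.mp hu).2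
  have hdisj2 : Disjoint D (nbr E b w0 ∩ nbr E a w0) := by
    rw [disjoint_left]
    intro u huD hu'
    have h2 := (mem_inter.mp hu').2
    rw [nbr_comm E a w0, (hi w0 hw0D).1] at h2
    exact (mem_sdiff.mp h2).2 (hDA huD)
  have hsum : D.card + (nbr E b w0 ∩ nbr E a w0).card ≤ δ := by
    rw [← card_union_of_disjoint hdisj2, ← hC]
    exact card_le_card (union_subset hDC hD'C)
  have hd2 : δ = 2 * D.card := by omega
  have hn3 : 3 ≤ n := by
    have h := card_le_card (subset_univ ({a,b,c} : Finset (Fin n)))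
    rwa [card_univ, Fintype.card_fin, card3_of_ne hab hac hbc] at h
  have hn4 : n = 4 * D.card := by omega
  have hdpos : 0 < D.card := by omega
  -- the partition
  have hABC : A ∪ B ∪ C = univ := by
    apply eq_univ_of_card
    have h1 : (A ∪ B).card + D.card = A.card + B.card := card_union_add_card_inter A B
    have h2 : (A ∪ B ∪ C).card + ((A ∪ B) ∩ C).card = (A ∪ B).card + C.card :=
      card_union_add_card_inter (A ∪ B) C
    have h3 : (A ∪ B) ∩ C = D := by
      rw [union_inter_distrib_right, hAC, hBC, union_self]
    rw [h3] at h2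
    rw [Fintype.card_fin]
    omega
  have hADcard : (A \ D).card = D.card := by rw [card_sdiff_of_subset hDA, hA]; omega
  have hBDcard : (B \ D).card = D.card := by rw [card_sdiff_of_subset hDB, hB]; omega
  have hCDcard : (C \ D).card = D.card := by rw [card_sdiff_of_subset hDC, hC]; omega
  obtain ⟨x0, hx0⟩ : (A \ D).Nonempty := card_pos.mp (by rw [hADcard]; omega)
  obtain ⟨y0, hy0⟩ : (B \ D).Nonempty := card_pos.mp (by rw [hBDcard]; omega)
  have hAnotB : ∀ u ∈ A \ D, u ∉ B := fun u hu hb =>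
    (mem_sdiff.mp hu).2 (mem_inter.mpr ⟨(mem_sdiff.mp hu).1, hb⟩)
  have hAnotC : ∀ u ∈ A \ D, u ∉ C := fun u hu hc =>
    (mem_sdiff.mp hu).2 (hAC ▸ mem_inter.mpr ⟨(mem_sdiff.mp hu).1, hc⟩)
  have hBnotA : ∀ u ∈ B \ D, u ∉ A := fun u hu ha =>
    (mem_sdiff.mp hu).2 (mem_inter.mpr ⟨ha, (mem_sdiff.mp hu).1⟩)
  have hBnotC : ∀ u ∈ B \ D, u ∉ C := fun u hu hc =>
    (mem_sdiff.mp hu).2 (hBC ▸ mem_inter.mpr ⟨(mem_sdiff.mp hu).1, hc⟩)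
  have hCnotA : ∀ u ∈ C \ D, u ∉ A := fun u hu ha =>
    (mem_sdiff.mp hu).2 (hAC ▸ mem_inter.mpr ⟨ha, (mem_sdiff.mp hu).1⟩)
  have hCnotB : ∀ u ∈ C \ D, u ∉ B := fun u hu hb =>
    (mem_sdiff.mp hu).2 (hBC ▸ mem_inter.mpr ⟨hb, (mem_sdiff.mp hu).1⟩)
  -- neighborhoods of vertices in the classes with base vertices
  have hii : ∀ u ∈ A \ D, nbr E u c = B ∧ nbr E u b = C := by
    intro u hu
    have huA := (mem_sdiff.mp hu).1
    have hw0bc : ({w0,b,c} : Finset (Fin n)) ∈ E := by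
      rw [t231 w0 b c]; exact (mem_nbr.mp hw0A).1
    constructor
    · have h2 : u ∈ nbr E w0 c := by
        rw [(hi w0 hw0D).2.2]; exact mem_sdiff.mpr ⟨mem_univ u, hAnotC u hu⟩
      have h3 := (K hcard hfree hn2 hw0bc huA h2).1
      rwa [(hi w0 hw0D).2.1, compl_compl'] at h3
    · have hw0cb : ({w0,c,b} : Finset (Fin n)) ∈ E := by rw [t132 w0 c b]; exact hw0bc
      have h1 : u ∈ nbr E c b := by rw [nbr_comm E c b]; exact huA
      have h2 : u ∈ nbr E w0 b := by
        rw [(hi w0 hw0D).2.1]; exact mem_sdiff.mpr ⟨mem_univ u, hAnotB u hu⟩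
      have h3 := (K hcard hfree hn2 hw0cb h1 h2).1
      rwa [(hi w0 hw0D).2.2, compl_compl'] at h3
  have hiii : ∀ u ∈ B \ D, nbr E u c = A ∧ nbr E u a = C := by
    intro u hu
    have huB := (mem_sdiff.mp hu).1
    have hw0ac : ({w0,a,c} : Finset (Fin n)) ∈ E := by
      rw [t231 w0 a c]; exact (mem_nbr.mp hw0B).1
    constructor
    · have h2 : u ∈ nbr E w0 c := by
        rw [(hi w0 hw0D).2.2]; exact mem_sdiff.mpr ⟨mem_univ u, hBnotC u hu⟩
      have h3 := (K hcard hfree hn2 hw0ac huB h2).1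
      rwa [(hi w0 hw0D).1, compl_compl'] at h3
    · have hw0ca : ({w0,c,a} : Finset (Fin n)) ∈ E := by rw [t132 w0 c a]; exact hw0ac
      have h1 : u ∈ nbr E c a := by rw [nbr_comm E c a]; exact huB
      have h2 : u ∈ nbr E w0 a := by
        rw [(hi w0 hw0D).1]; exact mem_sdiff.mpr ⟨mem_univ u, hBnotA u hu⟩
      have h3 := (K hcard hfree hn2 hw0ca h1 h2).1
      rwa [(hi w0 hw0D).2.2, compl_compl'] at h3
  have hiv : ∀ u ∈ C \ D, nbr E u b = A ∧ nbr E u a = B := by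
    intro u hu
    have huC := (mem_sdiff.mp hu).1
    have hw0ab : ({w0,a,b} : Finset (Fin n)) ∈ E := by
      rw [t231 w0 a b]; exact (mem_nbr.mp hw0C).1
    constructor
    · have h2 : u ∈ nbr E w0 b := by
        rw [(hi w0 hw0D).2.1]; exact mem_sdiff.mpr ⟨mem_univ u, hCnotB u hu⟩
      have h3 := (K hcard hfree hn2 hw0ab huC h2).1
      rwa [(hi w0 hw0D).1, compl_compl'] at h3
    · have hw0ba : ({w0,b,a} : Finset (Fin n)) ∈ E := by rw [t132 w0 b a]; exact hw0ab
      have h1 : u ∈ nbr E b a := by rw [nbr_comm E b a]; exact huC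
      have h2 : u ∈ nbr E w0 a := by
        rw [(hi w0 hw0D).1]; exact mem_sdiff.mpr ⟨mem_univ u, hCnotA u hu⟩
      have h3 := (K hcard hfree hn2 hw0ba h1 h2).1
      rwa [(hi w0 hw0D).2.1, compl_compl'] at h3
  -- cross-class neighborhoods
  have hv01 : ∀ x ∈ A \ D, ∀ y ∈ B \ D, nbr E x y = C := by
    intro x hx y hy
    have he : ({x,y,c} : Finset (Fin n)) ∈ E := by
      rw [t132 x y c]
      exact (mem_nbr.mp (by rw [(hii x hx).1]; exact (mem_sdiff.mp hy).1 : y ∈ nbr E x c)).1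
    have h1 : w0 ∈ nbr E y c := by rw [(hiii y hy).1]; exact hw0A
    have h2 : w0 ∈ nbr E x c := by rw [(hii x hx).1]; exact hw0B
    have h3 := (K hcard hfree hn2 he h1 h2).2.1
    rwa [(hi w0 hw0D).2.2, compl_compl'] at h3
  have hv02 : ∀ x ∈ A \ D, ∀ z ∈ C \ D, nbr E x z = B := by
    intro x hx z hz
    have he : ({x,z,b} : Finset (Fin n)) ∈ E := by
      rw [t132 x z b]
      exact (mem_nbr.mp (by rw [(hii x hx).2]; exact (mem_sdiff.mp hz).1 : z ∈ nbr E x b)).1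
    have h1 : w0 ∈ nbr E z b := by rw [(hiv z hz).1]; exact hw0A
    have h2 : w0 ∈ nbr E x b := by rw [(hii x hx).2]; exact hw0C
    have h3 := (K hcard hfree hn2 he h1 h2).2.1
    rwa [(hi w0 hw0D).2.1, compl_compl'] at h3
  have hv12 : ∀ y ∈ B \ D, ∀ z ∈ C \ D, nbr E y z = A := by
    intro y hy z hz
    have he : ({y,z,a} : Finset (Fin n)) ∈ E := by
      rw [t132 y z a]
      exact (mem_nbr.mp (by rw [(hiii y hy).2]; exact (mem_sdiff.mp hz).1 : z ∈ nbr E y a)).1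
    have h1 : w0 ∈ nbr E z a := by rw [(hiv z hz).2]; exact hw0B
    have h2 : w0 ∈ nbr E y a := by rw [(hiii y hy).2]; exact hw0C
    have h3 := (K hcard hfree hn2 he h1 h2).2.1
    rwa [(hi w0 hw0D).1, compl_compl'] at h3
  have hv03 : ∀ x ∈ A \ D, ∀ v ∈ D, nbr E x v = univ \ A := by
    intro x hx v hv
    have he : ({x,v,c} : Finset (Fin n)) ∈ E := by
      rw [t132 x v c]
      exact (mem_nbr.mp (by rw [(hii x hx).1]; exact hDB hv : v ∈ nbr E x c)).1
    have h1 : y0 ∈ nbr E v c := by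
      rw [(hi v hv).2.2]; exact mem_sdiff.mpr ⟨mem_univ y0, hBnotC y0 hy0⟩
    have h2 : y0 ∈ nbr E x c := by rw [(hii x hx).1]; exact (mem_sdiff.mp hy0).1
    have h3 := (K hcard hfree hn2 he h1 h2).2.1
    rwa [(hiii y0 hy0).1] at h3
  have hv13 : ∀ y ∈ B \ D, ∀ v ∈ D, nbr E y v = univ \ B := by
    intro y hy v hv
    have he : ({y,v,c} : Finset (Fin n)) ∈ E := by
      rw [t132 y v c]
      exact (mem_nbr.mp (by rw [(hiii y hy).1]; exact hDA hv : v ∈ nbr E y c)).1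
    have h1 : x0 ∈ nbr E v c := by
      rw [(hi v hv).2.2]; exact mem_sdiff.mpr ⟨mem_univ x0, hAnotC x0 hx0⟩
    have h2 : x0 ∈ nbr E y c := by rw [(hiii y hy).1]; exact (mem_sdiff.mp hx0).1
    have h3 := (K hcard hfree hn2 he h1 h2).2.1
    rwa [(hii x0 hx0).1] at h3
  have hv23 : ∀ z ∈ C \ D, ∀ v ∈ D, nbr E z v = univ \ C := by
    intro z hz v hv
    have he : ({z,v,b} : Finset (Fin n)) ∈ E := by
      rw [t132 z v b]
      exact (mem_nbr.mp (by rw [(hiv z hz).1]; exact hDA hv : v ∈ nbr E z b)).1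
    have h1 : x0 ∈ nbr E v b := by
      rw [(hi v hv).2.1]; exact mem_sdiff.mpr ⟨mem_univ x0, hAnotB x0 hx0⟩
    have h2 : x0 ∈ nbr E z b := by rw [(hiv z hz).1]; exact (mem_sdiff.mp hx0).1
    have h3 := (K hcard hfree hn2 he h1 h2).2.1
    rwa [(hii x0 hx0).2] at h3
  -- the coloring
  set f : Fin n → Fin 4 :=
    fun v => if v ∈ D then 3 else if v ∈ A then 0 else if v ∈ B then 1 else 2 with hfdef
  have hclass : ∀ v : Fin n, v ∈ D ∨ v ∈ A \ D ∨ v ∈ B \ D ∨ v ∈ C \ D := by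
    intro v
    by_cases hd : v ∈ D
    · exact Or.inl hd
    by_cases ha : v ∈ A
    · exact Or.inr (Or.inl (mem_sdiff.mpr ⟨ha, hd⟩))
    by_cases hb : v ∈ B
    · exact Or.inr (Or.inr (Or.inl (mem_sdiff.mpr ⟨hb, hd⟩)))
    have hv : v ∈ A ∪ B ∪ C := hABC ▸ mem_univ v
    rcases mem_union.mp hv with hv' | hv'
    · rcases mem_union.mp hv' with h | h
      · exact absurd h ha
      · exact absurd h hb
    · exact Or.inr (Or.inr (Or.inr (mem_sdiff.mpr ⟨hv', hd⟩)))
  have hfval3 : ∀ v ∈ D, f v = 3 := by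
    intro v hv; simp only [hfdef]; rw [if_pos hv]
  have hfval0 : ∀ v ∈ A \ D, f v = 0 := by
    intro v hv; simp only [hfdef]
    rw [if_neg (mem_sdiff.mp hv).2, if_pos (mem_sdiff.mp hv).1]
  have hfval1 : ∀ v ∈ B \ D, f v = 1 := by
    intro v hv; simp only [hfdef]
    rw [if_neg (mem_sdiff.mp hv).2, if_neg (hBnotA v hv), if_pos (mem_sdiff.mp hv).1]
  have hfval2 : ∀ v ∈ C \ D, f v = 2 := by
    intro v hv; simp only [hfdef]
    rw [if_neg (mem_sdiff.mp hv).2, if_neg (hCnotA v hv), if_neg (hCnotB v hv)]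
  have hf3 : ∀ v : Fin n, f v = 3 ↔ v ∈ D := by
    intro v
    refine ⟨fun h => ?_, hfval3 v⟩
    rcases hclass v with hv | hv | hv | hv
    · exact hv
    · rw [hfval0 v hv] at h; exact absurd h (by decide)
    · rw [hfval1 v hv] at h; exact absurd h (by decide)
    · rw [hfval2 v hv] at h; exact absurd h (by decide)
  have hf0 : ∀ v : Fin n, f v = 0 ↔ v ∈ A \ D := by
    intro v
    refine ⟨fun h => ?_, hfval0 v⟩
    rcases hclass v with hv | hv | hv | hv
    · rw [hfval3 v hv] at h; exact absurd h (by decide)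
    · exact hv
    · rw [hfval1 v hv] at h; exact absurd h (by decide)
    · rw [hfval2 v hv] at h; exact absurd h (by decide)
  have hf1 : ∀ v : Fin n, f v = 1 ↔ v ∈ B \ D := by
    intro v
    refine ⟨fun h => ?_, hfval1 v⟩
    rcases hclass v with hv | hv | hv | hv
    · rw [hfval3 v hv] at h; exact absurd h (by decide)
    · rw [hfval0 v hv] at h; exact absurd h (by decide)
    · exact hv
    · rw [hfval2 v hv] at h; exact absurd h (by decide)
  have hf2 : ∀ v : Fin n, f v = 2 ↔ v ∈ C \ D := by
    intro v
    refine ⟨fun h => ?_, hfval2 v⟩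
    rcases hclass v with hv | hv | hv | hv
    · rw [hfval3 v hv] at h; exact absurd h (by decide)
    · rw [hfval0 v hv] at h; exact absurd h (by decide)
    · rw [hfval1 v hv] at h; exact absurd h (by decide)
    · exact hv
  have hmemA : ∀ v : Fin n, v ∈ A ↔ (f v = 0 ∨ f v = 3) := by
    intro v
    constructor
    · intro hv
      by_cases hd : v ∈ D
      · exact Or.inr (hfval3 v hd)
      · exact Or.inl (hfval0 v (mem_sdiff.mpr ⟨hv, hd⟩))
    · rintro (hv | hv)
      · exact (mem_sdiff.mp ((hf0 v).mp hv)).1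
      · exact hDA ((hf3 v).mp hv)
  have hmemB : ∀ v : Fin n, v ∈ B ↔ (f v = 1 ∨ f v = 3) := by
    intro v
    constructor
    · intro hv
      by_cases hd : v ∈ D
      · exact Or.inr (hfval3 v hd)
      · exact Or.inl (hfval1 v (mem_sdiff.mpr ⟨hv, hd⟩))
    · rintro (hv | hv)
      · exact (mem_sdiff.mp ((hf1 v).mp hv)).1
      · exact hDB ((hf3 v).mp hv)
  have hmemC : ∀ v : Fin n, v ∈ C ↔ (f v = 2 ∨ f v = 3) := by
    intro v
    constructor
    · intro hv
      by_cases hd : v ∈ D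
      · exact Or.inr (hfval3 v hd)
      · exact Or.inl (hfval2 v (mem_sdiff.mpr ⟨hv, hd⟩))
    · rintro (hv | hv)
      · exact (mem_sdiff.mp ((hf2 v).mp hv)).1
      · exact hDC ((hf3 v).mp hv)
  have hfib : ∀ i : Fin 4, (univ.filter (fun v => f v = i)).card = D.card := by
    have h4 : ∀ j : Fin 4, j = 0 ∨ j = 1 ∨ j = 2 ∨ j = 3 := by decide
    intro i
    rcases h4 i with rfl | rfl | rfl | rfl
    · rw [show univ.filter (fun v => f v = 0) = A \ D from by
        ext v; simp only [mem_filter, mem_univ, true_and]; exact hf0 v]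
      exact hADcard
    · rw [show univ.filter (fun v => f v = 1) = B \ D from by
        ext v; simp only [mem_filter, mem_univ, true_and]; exact hf1 v]
      exact hBDcard
    · rw [show univ.filter (fun v => f v = 2) = C \ D from by
        ext v; simp only [mem_filter, mem_univ, true_and]; exact hf2 v]
      exact hCDcard
    · rw [show univ.filter (fun v => f v = 3) = D from by
        ext v; simp only [mem_filter, mem_univ, true_and]; exact hf3 v]
  -- the master neighborhood lemma
  have hNf : ∀ p q : Fin n, f p ≠ f q →
      nbr E p q = univ.filter (fun v => f v ≠ f p ∧ f v ≠ f q) := by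
    intro p q hpq
    rcases hclass p with hp | hp | hp | hp <;> rcases hclass q with hq | hq | hq | hq
    · exact absurd (by rw [hfval3 p hp, hfval3 q hq]) hpq
    · rw [nbr_comm E p q, hv03 q hq p hp, hfval3 p hp, hfval0 q hq]
      ext v
      simp only [mem_sdiff, mem_univ, true_and, mem_filter, hmemA v]
      generalize f v = u
      revert u; decide
    · rw [nbr_comm E p q, hv13 q hq p hp, hfval3 p hp, hfval1 q hq]
      ext v
      simp only [mem_sdiff, mem_univ, true_and, mem_filter, hmemB v]
      generalize f v = u
      revert u; decide
    · rw [nbr_comm E p q, hv23 q hq p hp, hfval3 p hp, hfval2 q hq]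
      ext v
      simp only [mem_sdiff, mem_univ, true_and, mem_filter, hmemC v]
      generalize f v = u
      revert u; decide
    · rw [hv03 p hp q hq, hfval0 p hp, hfval3 q hq]
      ext v
      simp only [mem_sdiff, mem_univ, true_and, mem_filter, hmemA v]
      generalize f v = u
      revert u; decide
    · exact absurd (by rw [hfval0 p hp, hfval0 q hq]) hpq
    · rw [hv01 p hp q hq, hfval0 p hp, hfval1 q hq]
      ext v
      simp only [mem_filter, mem_univ, true_and, hmemC v]
      generalize f v = u
      revert u; decide
    · rw [hv02 p hp q hq, hfval0 p hp, hfval2 q hq]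
      ext v
      simp only [mem_filter, mem_univ, true_and, hmemB v]
      generalize f v = u
      revert u; decide
    · rw [hv13 p hp q hq, hfval1 p hp, hfval3 q hq]
      ext v
      simp only [mem_sdiff, mem_univ, true_and, mem_filter, hmemB v]
      generalize f v = u
      revert u; decide
    · rw [nbr_comm E p q, hv01 q hq p hp, hfval1 p hp, hfval0 q hq]
      ext v
      simp only [mem_filter, mem_univ, true_and, hmemC v]
      generalize f v = u
      revert u; decide
    · exact absurd (by rw [hfval1 p hp, hfval1 q hq]) hpq
    · rw [hv12 p hp q hq, hfval1 p hp, hfval2 q hq]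
      ext v
      simp only [mem_filter, mem_univ, true_and, hmemA v]
      generalize f v = u
      revert u; decide
    · rw [hv23 p hp q hq, hfval2 p hp, hfval3 q hq]
      ext v
      simp only [mem_sdiff, mem_univ, true_and, mem_filter, hmemC v]
      generalize f v = u
      revert u; decide
    · rw [nbr_comm E p q, hv02 q hq p hp, hfval2 p hp, hfval0 q hq]
      ext v
      simp only [mem_filter, mem_univ, true_and, hmemB v]
      generalize f v = u
      revert u; decide
    · rw [nbr_comm E p q, hv12 q hq p hp, hfval2 p hp, hfval1 q hq]
      ext v
      simp only [mem_filter, mem_univ, true_and, hmemA v]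
      generalize f v = u
      revert u; decide
    · exact absurd (by rw [hfval2 p hp, hfval2 q hq]) hpq
  -- no edge has two vertices in the same class
  have hsame : ∀ p q r : Fin n, f p = f q → ({p,q,r} : Finset (Fin n)) ∈ E → False := by
    intro p q r hpq he
    obtain ⟨hpq', hpr', hqr'⟩ := card3_ne (hcard _ he)
    have hsub : nbr E p q ⊆ univ.filter (fun v => f v = f p) := by
      intro u hu
      obtain ⟨heu, hup, huq⟩ := mem_nbr.mp hu
      simp only [mem_filter, mem_univ, true_and]
      by_contra hne'
      have hq' : q ∈ nbr E p u := by
        refine mem_nbr.mpr ⟨?_, Ne.symm hpq', Ne.symm huq⟩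
        rw [t132 p u q]; exact heu
      rw [hNf p u (fun h => hne' h.symm)] at hq'
      exact (mem_filter.mp hq').2.1 hpq.symm
    have h1 : δ ≤ (nbr E p q).card := delta_le hcard he
    have h2 := card_le_card hsub
    rw [hfib (f p)] at h2
    omega
  refine ⟨⟨D.card, hn4⟩, f, ?_, ?_⟩
  · intro i j
    rw [hfib i, hfib j]
    omega
  · intro e
    constructor
    · intro he
      obtain ⟨x, y, z, hxy, hxz, hyz, rfl⟩ := Finset.card_eq_three.mp (hcard e he)
      refine ⟨card3_of_ne hxy hxz hyz, ?_⟩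
      rw [image_insert, image_insert, image_singleton]
      have hfxy : f x ≠ f y := fun h => hsame x y z h he
      have hfxz : f x ≠ f z := fun h => hsame x z y h (by rw [t132 x z y]; exact he)
      have hfyz : f y ≠ f z := fun h => hsame y z x h (by rw [← t231 x y z]; exact he)
      exact card3_of_ne hfxy hfxz hfyz
    · rintro ⟨h3, himg⟩
      obtain ⟨x, y, z, hxy, hxz, hyz, rfl⟩ := Finset.card_eq_three.mp h3
      rw [image_insert, image_insert, image_singleton] at himg
      obtain ⟨hfxy, hfxz, hfyz⟩ := card3_ne himg
      have hz : z ∈ nbr E x y := by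
        rw [hNf x y hfxy]
        simp only [mem_filter, mem_univ, true_and]
        exact ⟨Ne.symm hfxz, Ne.symm hfyz⟩
      exact (mem_nbr.mp hz).1
end

section
/- For every integer n ≥ 3 that is not divisible by 4, the positive co-degree Turán number of F₃,₂ satisfies co⁺ex(n, F₃,₂) = ⌊(n−1)/2⌋. -/
open Finset

/-! ### Auxiliary machinery -/

section Aux

variable {n : ℕ}

/-- The co-neighborhood of a pair of vertices. -/
def coN (E : Finset (Finset (Fin n))) (u v : Fin n) : Finset (Fin n) :=
  univ.filter (fun t => t ∉ ({u, v} : Finset (Fin n)) ∧ insert t {u, v} ∈ E)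

lemma mem_coN {E : Finset (Finset (Fin n))} {u v t : Fin n} :
    t ∈ coN E u v ↔ (t ≠ u ∧ t ≠ v) ∧ insert t {u, v} ∈ E := by
  simp [coN]

lemma coN_symm (E : Finset (Finset (Fin n))) (u v : Fin n) : coN E u v = coN E v u := by
  simp [coN, Finset.pair_comm u v]

lemma not_mem_coN_self (E : Finset (Finset (Fin n))) (u v : Fin n) : u ∉ coN E u v := by
  simp [mem_coN]

lemma triple_card {a b c : Fin n} (hab : a ≠ b) (hac : a ≠ c) (hbc : b ≠ c) :
    ({a, b, c} : Finset (Fin n)).card = 3 := by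
  rw [card_insert_of_notMem (by simp [hab, hac]), card_pair hbc]

lemma filter_triple_card {α : Type*} [DecidableEq α] (p : α → Prop) [DecidablePred p]
    {a b c : α} (hab : a ≠ b) (hac : a ≠ c) (hbc : b ≠ c) :
    (({a, b, c} : Finset α).filter p).card
      = (if p a then 1 else 0) + (if p b then 1 else 0) + (if p c then 1 else 0) := by
  rw [Finset.filter_insert, Finset.filter_insert, Finset.filter_singleton]
  split_ifs <;>
    simp_all [Finset.card_insert_of_notMem, Finset.mem_insert, Finset.mem_filter, hab, hac, hbc]

lemma coDeg_pair_eq (E : Finset (Finset (Fin n))) (h3 : ∀ e ∈ E, e.card = 3) {u v : Fin n}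
    (huv : u ≠ v) : coDeg E {u, v} = (coN E u v).card := by
  unfold coDeg
  have himg : E.filter (fun e => ({u,v} : Finset (Fin n)) ⊆ e)
      = (coN E u v).image (fun t => insert t {u, v}) := by
    ext e
    simp only [mem_filter, mem_image]
    constructor
    · rintro ⟨he, hsub⟩
      have hcard : e.card = 3 := h3 e he
      have hpair : ({u,v} : Finset (Fin n)).card = 2 := card_pair huv
      have : ({u,v} : Finset (Fin n)) ⊂ e := by
        refine Finset.ssubset_iff_subset_ne.2 ⟨hsub, ?_⟩
        intro h; rw [h] at hpair; omega
      obtain ⟨t, hte, htuv⟩ := Finset.exists_of_ssubset this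
      refine ⟨t, mem_coN.2 ⟨⟨?_, ?_⟩, ?_⟩, ?_⟩
      · rintro rfl; exact htuv (by simp)
      · rintro rfl; exact htuv (by simp)
      · have hsub2 : insert t ({u,v} : Finset (Fin n)) ⊆ e := insert_subset hte hsub
        have hc2 : (insert t ({u,v} : Finset (Fin n))).card = 3 := by
          rw [card_insert_of_notMem htuv, hpair]
        exact (Finset.eq_of_subset_of_card_le hsub2 (by omega)) ▸ ((Finset.eq_of_subset_of_card_le hsub2 (by omega)).symm ▸ he)
      · have hsub2 : insert t ({u,v} : Finset (Fin n)) ⊆ e := insert_subset hte hsub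
        have hc2 : (insert t ({u,v} : Finset (Fin n))).card = 3 := by
          rw [card_insert_of_notMem htuv, hpair]
        exact Finset.eq_of_subset_of_card_le hsub2 (by omega)
    · rintro ⟨t, ht, rfl⟩
      obtain ⟨⟨h1, h2⟩, hE⟩ := mem_coN.1 ht
      exact ⟨hE, subset_insert _ _⟩
  rw [himg, Finset.card_image_of_injOn]
  intro s hs t ht hst
  obtain ⟨⟨hs1, hs2⟩, _⟩ := mem_coN.1 hs
  obtain ⟨⟨ht1, ht2⟩, _⟩ := mem_coN.1 ht
  have : s ∈ insert t ({u,v} : Finset (Fin n)) := by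
    simp only at hst
    rw [← hst]; exact mem_insert_self _ _
  simp only [mem_insert, mem_singleton] at this
  tauto

lemma contains_F32 {E : Finset (Finset (Fin n))} {u v a b c : Fin n} (huv : u ≠ v)
    (ha : a ∈ coN E u v) (hb : b ∈ coN E u v) (hc : c ∈ coN E u v)
    (hab : a ≠ b) (hac : a ≠ c) (hbc : b ≠ c)
    (habc : ({a, b, c} : Finset (Fin n)) ∈ E) : Contains F32 E := by
  obtain ⟨⟨hau, hav⟩, haE⟩ := mem_coN.1 ha
  obtain ⟨⟨hbu, hbv⟩, hbE⟩ := mem_coN.1 hb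
  obtain ⟨⟨hcu, hcv⟩, hcE⟩ := mem_coN.1 hc
  refine ⟨![a, b, c, u, v], ?_, ?_⟩
  · intro i j hij
    fin_cases i <;> fin_cases j <;> simp_all
  · intro e he
    fin_cases he <;> simp [Matrix.cons_val_zero, Matrix.cons_val_one]
    · exact habc
    · exact haE
    · exact hbE
    · exact hcE

lemma key {E : Finset (Finset (Fin n))} (hfree : ¬ Contains F32 E) {d0 : ℕ}
    (hδ : ∀ u v : Fin n, u ≠ v → (coN E u v).Nonempty → d0 ≤ (coN E u v).card)
    (hd0 : n ≤ 2 * d0)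
    {a b c w : Fin n} (ha : a ∈ coN E b c) (hb : b ∈ coN E a c) (hc : c ∈ coN E a b)
    (hw1 : w ∈ coN E b c) (hw2 : w ∈ coN E a c) :
    coN E w c = (coN E a b)ᶜ := by
  obtain ⟨⟨hab', hac'⟩, haE⟩ := mem_coN.1 ha
  obtain ⟨⟨hba', hbc'⟩, hbE⟩ := mem_coN.1 hb
  obtain ⟨⟨hcb', hca'⟩, _⟩ := mem_coN.1 hc
  obtain ⟨⟨hwb', hwc'⟩, hw1E⟩ := mem_coN.1 hw1
  obtain ⟨⟨hwa', _⟩, hw2E⟩ := mem_coN.1 hw2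
  have haw : a ∈ coN E w c := by
    refine mem_coN.2 ⟨⟨Ne.symm hwa', hac'⟩, ?_⟩
    have : (insert a {w, c} : Finset (Fin n)) = insert w {a, c} := by ext t; simp; tauto
    rw [this]; exact hw2E
  have hbw : b ∈ coN E w c := by
    refine mem_coN.2 ⟨⟨Ne.symm hwb', hbc'⟩, ?_⟩
    have : (insert b {w, c} : Finset (Fin n)) = insert w {b, c} := by ext t; simp; tauto
    rw [this]; exact hw1E
  have hdisj : ∀ t ∈ coN E a b, t ∉ coN E w c := by
    intro t ht htw
    obtain ⟨⟨hta, htb⟩, htE⟩ := mem_coN.1 ht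
    apply hfree
    refine contains_F32 hwc' haw hbw htw hab' (Ne.symm hta) (Ne.symm htb) ?_
    have : ({a, b, t} : Finset (Fin n)) = insert t {a, b} := by ext s; simp; tauto
    rw [this]; exact htE
  have hA : d0 ≤ (coN E a b).card := hδ a b hab' ⟨c, hc⟩
  have hW : d0 ≤ (coN E w c).card := hδ w c hwc' ⟨a, haw⟩
  have hdj : Disjoint (coN E a b) (coN E w c) := disjoint_left.2 hdisj
  have hun : (coN E a b).card + (coN E w c).card ≤ n := by
    rw [← card_union_of_disjoint hdj]
    calc (coN E a b ∪ coN E w c).card ≤ Fintype.card (Fin n) := card_le_univ _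
    _ = n := Fintype.card_fin n
  have hsub : coN E w c ⊆ (coN E a b)ᶜ := by
    intro t ht
    rw [mem_compl]
    intro ht'
    exact hdisj t ht' ht
  exact Finset.eq_of_subset_of_card_le hsub (by rw [card_compl, Fintype.card_fin]; omega)

set_option maxHeartbeats 1600000 in
lemma upper_bound (E : Finset (Finset (Fin n))) (h3 : ∀ e ∈ E, e.card = 3) (hne : E.Nonempty)
    (hfree : ¬ Contains F32 E) (hndvd : ¬ 4 ∣ n) : minPosCoDeg 3 n E ≤ (n - 1) / 2 := by
  by_contra hcon
  push_neg at hcon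
  set d0 : ℕ := (n - 1) / 2 + 1 with hd0def
  have hmle : d0 ≤ minPosCoDeg 3 n E := hcon
  have hδ : ∀ u v : Fin n, u ≠ v → (coN E u v).Nonempty → d0 ≤ (coN E u v).card := by
    intro u v huv hNe
    have hcd : coDeg E {u, v} = (coN E u v).card := coDeg_pair_eq E h3 huv
    have hpos : 0 < coDeg E {u, v} := by
      rw [hcd]; exact card_pos.2 hNe
    have hmem : coDeg E {u, v} ∈
        {d : ℕ | ∃ S : Finset (Fin n), S.card = 3 - 1 ∧ coDeg E S = d ∧ 0 < d} :=
      ⟨{u, v}, card_pair huv, rfl, hpos⟩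
    have := Nat.sInf_le hmem
    rw [hcd] at this
    exact le_trans hmle (le_trans this le_rfl)
  have hd0 : n ≤ 2 * d0 := by omega
  obtain ⟨e₀, he₀⟩ := hne
  obtain ⟨x, y, z, hxy, hxz, hyz, rfl⟩ := Finset.card_eq_three.1 (h3 e₀ he₀)
  have hx : x ∈ coN E y z := mem_coN.2 ⟨⟨hxy, hxz⟩, he₀⟩
  have hy : y ∈ coN E x z := by
    refine mem_coN.2 ⟨⟨Ne.symm hxy, hyz⟩, ?_⟩
    have : (insert y {x, z} : Finset (Fin n)) = {x, y, z} := by ext t; simp; tauto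
    rw [this]; exact he₀
  have hz : z ∈ coN E x y := by
    refine mem_coN.2 ⟨⟨Ne.symm hxz, Ne.symm hyz⟩, ?_⟩
    have : (insert z {x, y} : Finset (Fin n)) = {x, y, z} := by ext t; simp; tauto
    rw [this]; exact he₀
  set A := coN E y z with hA
  set B := coN E x z with hB
  set C := coN E x y with hC
  -- the three instantiations of `key`
  have hABC : ∀ w ∈ A ∩ B, coN E w z = Cᶜ := by
    intro w hw
    obtain ⟨hw1, hw2⟩ := mem_inter.1 hw
    exact key hfree hδ hd0 hx hy hz hw1 hw2
  have hBCA : ∀ w ∈ B ∩ C, coN E w x = Aᶜ := by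
    intro w hw
    obtain ⟨hw1, hw2⟩ := mem_inter.1 hw
    have := key hfree hδ hd0 (a := y) (b := z) (c := x)
      (by rw [coN_symm]; exact hy) (by rw [coN_symm]; exact hz) hx
      (by rw [coN_symm]; exact hw1) (by rw [coN_symm]; exact hw2)
    rwa [← hA] at this
  have hCAB : ∀ w ∈ A ∩ C, coN E w y = Bᶜ := by
    intro w hw
    obtain ⟨hw1, hw2⟩ := mem_inter.1 hw
    have := key hfree hδ hd0 (a := x) (b := z) (c := y)
      (by rw [coN_symm]; exact hx) hz hy
      (by rw [coN_symm]; exact hw1) hw2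
    rwa [← hB] at this
  -- membership corollaries
  have hsubC : A ∩ B ⊆ C := by
    intro w hw
    have h1 := hABC w hw
    have h2 : w ∉ coN E w z := not_mem_coN_self E w z
    rw [h1, mem_compl, not_not] at h2
    exact h2
  have hsubA : B ∩ C ⊆ A := by
    intro w hw
    have h1 := hBCA w hw
    have h2 : w ∉ coN E w x := not_mem_coN_self E w x
    rw [h1, mem_compl, not_not] at h2
    exact h2
  have hsubB : A ∩ C ⊆ B := by
    intro w hw
    have h1 := hCAB w hw
    have h2 : w ∉ coN E w y := not_mem_coN_self E w y
    rw [h1, mem_compl, not_not] at h2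
    exact h2
  set D := A ∩ B ∩ C with hDdef
  have hAd : d0 ≤ A.card := hδ y z hyz ⟨x, hx⟩
  have hBd : d0 ≤ B.card := hδ x z hxz ⟨y, hy⟩
  have hCd : d0 ≤ C.card := hδ x y hxy ⟨z, hz⟩
  have hcardn : ∀ (s : Finset (Fin n)), s.card ≤ n := by
    intro s
    calc s.card ≤ Fintype.card (Fin n) := card_le_univ _
    _ = n := Fintype.card_fin n
  have hABD : A ∩ B = D := by
    apply Finset.Subset.antisymm
    · intro w hw; exact mem_inter.2 ⟨hw, hsubC hw⟩
    · exact inter_subset_left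
  have hBCD : B ∩ C = D := by
    apply Finset.Subset.antisymm
    · intro w hw
      obtain ⟨h1, h2⟩ := mem_inter.1 hw
      exact mem_inter.2 ⟨mem_inter.2 ⟨hsubA hw, h1⟩, h2⟩
    · intro w hw
      obtain ⟨h1, h2⟩ := mem_inter.1 hw
      exact mem_inter.2 ⟨(mem_inter.1 h1).2, h2⟩
  have hACD : A ∩ C = D := by
    apply Finset.Subset.antisymm
    · intro w hw
      obtain ⟨h1, h2⟩ := mem_inter.1 hw
      exact mem_inter.2 ⟨mem_inter.2 ⟨h1, hsubB hw⟩, h2⟩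
    · intro w hw
      obtain ⟨h1, h2⟩ := mem_inter.1 hw
      exact mem_inter.2 ⟨(mem_inter.1 h1).1, h2⟩
  have hD : D.Nonempty := by
    rw [nonempty_iff_ne_empty]
    intro hDe
    have hdAB : Disjoint A B := disjoint_iff_inter_eq_empty.2 (by rw [hABD, hDe])
    have hdABC : Disjoint (A ∪ B) C := by
      rw [disjoint_iff_inter_eq_empty, union_inter_distrib_right, hACD, hBCD, hDe, union_empty]
    have hcard : (A ∪ B ∪ C).card = A.card + B.card + C.card := by
      rw [card_union_of_disjoint hdABC, card_union_of_disjoint hdAB]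
    have := hcardn (A ∪ B ∪ C)
    omega
  obtain ⟨w, hwD⟩ := hD
  have hwAB : w ∈ A ∩ B := (mem_inter.1 hwD).1
  have hwC : w ∈ C := (mem_inter.1 hwD).2
  have hwA : w ∈ A := (mem_inter.1 hwAB).1
  have hwB : w ∈ B := (mem_inter.1 hwAB).2
  have K1 : coN E w z = Cᶜ := hABC w hwAB
  have K2 : coN E w x = Aᶜ := hBCA w (mem_inter.2 ⟨hwB, hwC⟩)
  have K3 : coN E w y = Bᶜ := hCAB w (mem_inter.2 ⟨hwA, hwC⟩)
  -- distinctness facts about w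
  obtain ⟨⟨hwy, hwz⟩, _⟩ := mem_coN.1 hwA
  obtain ⟨⟨hwx, _⟩, _⟩ := mem_coN.1 hwB
  -- cover
  have hcover : ∀ v : Fin n, v ∈ A ∪ B ∪ C := by
    intro v
    by_contra hv
    simp only [mem_union, not_or] at hv
    obtain ⟨⟨hvA, hvB⟩, hvC⟩ := hv
    have hvz : v ∈ coN E w z := by rw [K1, mem_compl]; exact hvC
    have hvx : v ∈ coN E w x := by rw [K2, mem_compl]; exact hvA
    have hvy : v ∈ coN E w y := by rw [K3, mem_compl]; exact hvB
    obtain ⟨⟨hvw, _⟩, hvzE⟩ := mem_coN.1 hvz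
    obtain ⟨⟨_, hvx'⟩, hvxE⟩ := mem_coN.1 hvx
    obtain ⟨⟨_, hvy'⟩, hvyE⟩ := mem_coN.1 hvy
    have hxwv : x ∈ coN E w v := by
      refine mem_coN.2 ⟨⟨Ne.symm hwx, Ne.symm hvx'⟩, ?_⟩
      have : (insert x {w, v} : Finset (Fin n)) = insert v {w, x} := by ext t; simp; tauto
      rw [this]; exact hvxE
    have hywv : y ∈ coN E w v := by
      refine mem_coN.2 ⟨⟨Ne.symm hwy, Ne.symm hvy'⟩, ?_⟩
      have : (insert y {w, v} : Finset (Fin n)) = insert v {w, y} := by ext t; simp; tauto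
      rw [this]; exact hvyE
    have hzwv : z ∈ coN E w v := by
      refine mem_coN.2 ⟨⟨Ne.symm hwz, ?_⟩, ?_⟩
      · intro h; rw [← h] at hvz; exact (mem_coN.1 hvz).1.2 rfl
      · have : (insert z {w, v} : Finset (Fin n)) = insert v {w, z} := by ext t; simp; tauto
        rw [this]; exact hvzE
    exact hfree (contains_F32 (Ne.symm hvw) hxwv hywv hzwv hxy hxz hyz he₀)
  have hUniv : A ∪ B ∪ C = univ := eq_univ_iff_forall.2 hcover
  -- exact sizes
  have hCsize : C.card = d0 ∧ n = 2 * d0 := by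
    have hne1 : (coN E w z).Nonempty := ⟨x, by rw [K1, mem_compl]; exact not_mem_coN_self E x y⟩
    have := hδ w z hwz hne1
    rw [K1, card_compl, Fintype.card_fin] at this
    constructor <;> omega
  have hAsize : A.card = d0 := by
    have hne1 : (coN E w x).Nonempty := ⟨y, by
      rw [K2, mem_compl, hA]
      exact not_mem_coN_self E y z⟩
    have := hδ w x hwx hne1
    rw [K2, card_compl, Fintype.card_fin] at this
    omega
  have hBsize : B.card = d0 := by
    have hne1 : (coN E w y).Nonempty := ⟨z, by
      rw [K3, mem_compl, hB]
      intro h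
      exact (mem_coN.1 h).1.2 rfl⟩
    have := hδ w y hwy hne1
    rw [K3, card_compl, Fintype.card_fin] at this
    omega
  -- inclusion-exclusion
  have c1 : (B ∪ C).card + (B ∩ C).card = B.card + C.card := card_union_add_card_inter B C
  have c2 : (A ∪ (B ∪ C)).card + (A ∩ (B ∪ C)).card = A.card + (B ∪ C).card :=
    card_union_add_card_inter A (B ∪ C)
  have hint : A ∩ (B ∪ C) = D := by
    rw [inter_union_distrib_left, hABD, hACD, union_self]
  have hassoc : A ∪ (B ∪ C) = univ := by rw [← union_assoc]; exact hUniv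
  rw [hint, hassoc, card_univ, Fintype.card_fin] at c2
  rw [hBCD] at c1
  have hC2 : C.card = d0 := hCsize.1
  have hn2 : n = 2 * d0 := hCsize.2
  exact hndvd ⟨D.card, by omega⟩

/-! The bipartite construction -/

def Ebip (n : ℕ) : Finset (Finset (Fin n)) :=
  (univ.powersetCard 3).filter
    (fun e => (e.filter (fun v : Fin n => (v : ℕ) < n / 2 + 1)).card = 2)

lemma mem_Ebip {e : Finset (Fin n)} :
    e ∈ Ebip n ↔ e.card = 3 ∧ (e.filter (fun v : Fin n => (v : ℕ) < n / 2 + 1)).card = 2 := by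
  simp [Ebip, mem_powersetCard]

lemma Ebip_card3 : ∀ e ∈ Ebip n, e.card = 3 := fun e he => (mem_Ebip.1 he).1

lemma card_filter_lt (n k : ℕ) :
    (univ.filter (fun v : Fin n => (v : ℕ) < k)).card = min k n := by
  rw [Finset.card_filter]
  rw [Fin.sum_univ_eq_sum_range (fun i => if i < k then 1 else 0)]
  rw [← Finset.card_filter]
  have : (Finset.range n).filter (fun i => i < k) = Finset.range (min k n) := by
    ext i; simp; omega
  rw [this, card_range]

lemma card_filter_not_lt (n k : ℕ) :
    (univ.filter (fun v : Fin n => ¬ (v : ℕ) < k)).card = n - min k n := by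
  have h := Finset.card_filter_add_card_filter_not
    (s := (univ : Finset (Fin n))) (p := fun v : Fin n => (v : ℕ) < k)
  rw [card_filter_lt] at h
  rw [card_univ, Fintype.card_fin] at h
  omega

lemma coN_Ebip_BB {u v : Fin n} (hu : (u : ℕ) < n / 2 + 1) (hv : (v : ℕ) < n / 2 + 1)
    (huv : u ≠ v) :
    coN (Ebip n) u v = univ.filter (fun t : Fin n => ¬ (t : ℕ) < n / 2 + 1) := by
  ext t
  simp only [mem_coN, mem_filter, mem_univ, true_and, mem_insert, mem_singleton, not_or]
  constructor
  · rintro ⟨⟨htu, htv⟩, hE⟩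
    obtain ⟨-, hcnt⟩ := mem_Ebip.1 hE
    rw [filter_triple_card _ htu htv huv] at hcnt
    intro hpt
    simp only [hpt, hu, hv, if_true] at hcnt
    omega
  · intro hnt
    have htu : t ≠ u := fun h => hnt (h ▸ hu)
    have htv : t ≠ v := fun h => hnt (h ▸ hv)
    refine ⟨⟨htu, htv⟩, mem_Ebip.2 ⟨triple_card htu htv huv, ?_⟩⟩
    rw [filter_triple_card _ htu htv huv]
    simp [hnt, hu, hv]

lemma coN_Ebip_AB {u v : Fin n} (hu : ¬ (u : ℕ) < n / 2 + 1) (hv : (v : ℕ) < n / 2 + 1) :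
    coN (Ebip n) u v = (univ.filter (fun t : Fin n => (t : ℕ) < n / 2 + 1)).erase v := by
  have huv : u ≠ v := fun h => hu (h ▸ hv)
  ext t
  simp only [mem_coN, mem_erase, mem_filter, mem_univ, true_and]
  constructor
  · rintro ⟨⟨htu, htv⟩, hE⟩
    obtain ⟨-, hcnt⟩ := mem_Ebip.1 hE
    rw [filter_triple_card _ htu htv huv] at hcnt
    refine ⟨htv, ?_⟩
    by_contra hpt
    simp only [hpt, hu, hv, if_true, if_false] at hcnt
    omega
  · rintro ⟨htv, hpt⟩
    have htu : t ≠ u := fun h => hu (h ▸ hpt)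
    refine ⟨⟨htu, htv⟩, mem_Ebip.2 ⟨triple_card htu htv huv, ?_⟩⟩
    rw [filter_triple_card _ htu htv huv]
    simp [hpt, hu, hv]

lemma coN_Ebip_AA {u v : Fin n} (hu : ¬ (u : ℕ) < n / 2 + 1) (hv : ¬ (v : ℕ) < n / 2 + 1)
    (huv : u ≠ v) : coN (Ebip n) u v = ∅ := by
  ext t
  simp only [mem_coN, notMem_empty, iff_false]
  rintro ⟨⟨htu, htv⟩, hE⟩
  obtain ⟨-, hcnt⟩ := mem_Ebip.1 hE
  rw [filter_triple_card _ htu htv huv] at hcnt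
  simp only [hu, hv, if_false] at hcnt
  split_ifs at hcnt <;> omega

lemma Ebip_nonempty (hn : 3 ≤ n) : (Ebip n).Nonempty := by
  have h0 : (0 : ℕ) < n := by omega
  have h1 : (1 : ℕ) < n := by omega
  have h2 : n - 1 < n := by omega
  have ne01 : (⟨0, h0⟩ : Fin n) ≠ ⟨1, h1⟩ := Fin.ne_of_val_ne (show (0:ℕ) ≠ 1 by omega)
  have ne02 : (⟨0, h0⟩ : Fin n) ≠ ⟨n - 1, h2⟩ := Fin.ne_of_val_ne (show (0:ℕ) ≠ n - 1 by omega)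
  have ne12 : (⟨1, h1⟩ : Fin n) ≠ ⟨n - 1, h2⟩ := Fin.ne_of_val_ne (show (1:ℕ) ≠ n - 1 by omega)
  refine ⟨{⟨0, h0⟩, ⟨1, h1⟩, ⟨n - 1, h2⟩}, mem_Ebip.2 ⟨?_, ?_⟩⟩
  · exact triple_card ne01 ne02 ne12
  · rw [filter_triple_card _ ne01 ne02 ne12]
    have e0 : ((⟨0, h0⟩ : Fin n) : ℕ) < n / 2 + 1 := show (0:ℕ) < n / 2 + 1 by omega
    have e1 : ((⟨1, h1⟩ : Fin n) : ℕ) < n / 2 + 1 := show (1:ℕ) < n / 2 + 1 by omega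
    have e2 : ¬ ((⟨n - 1, h2⟩ : Fin n) : ℕ) < n / 2 + 1 := show ¬ (n - 1 < n / 2 + 1) by omega
    simp [e0, e1, e2]

lemma Ebip_free : ¬ Contains F32 (Ebip n) := by
  rintro ⟨f, hinj, hmap⟩
  have hne : ∀ i j : Fin 5, i ≠ j → f i ≠ f j := fun i j hij h => hij (hinj h)
  have get1 : ∀ a b c : Fin 5, a ≠ b → a ≠ c → b ≠ c →
      ({a, b, c} : Finset (Fin 5)) ∈ F32 →
      (if (f a : ℕ) < n / 2 + 1 then 1 else 0) + (if (f b : ℕ) < n / 2 + 1 then 1 else 0)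
        + (if (f c : ℕ) < n / 2 + 1 then 1 else 0) = 2 := by
    intro a b c hab hac hbc hmem
    have := hmap _ hmem
    rw [image_insert, image_insert, image_singleton] at this
    obtain ⟨-, hcnt⟩ := mem_Ebip.1 this
    rw [filter_triple_card _ (hne a b hab) (hne a c hac) (hne b c hbc)] at hcnt
    exact hcnt
  have e1 := get1 0 1 2 (by decide) (by decide) (by decide) (by decide)
  have e2 := get1 0 3 4 (by decide) (by decide) (by decide) (by decide)
  have e3 := get1 1 3 4 (by decide) (by decide) (by decide) (by decide)
  have e4 := get1 2 3 4 (by decide) (by decide) (by decide) (by decide)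
  clear hmap hinj hne get1
  split_ifs at e1 e2 e3 e4 <;> omega

lemma Ebip_minPosCoDeg (hn : 3 ≤ n) : minPosCoDeg 3 n (Ebip n) = (n - 1) / 2 := by
  have hAcard : (univ.filter (fun t : Fin n => ¬ (t : ℕ) < n / 2 + 1)).card = (n - 1) / 2 := by
    rw [card_filter_not_lt]; omega
  have hBcard : (univ.filter (fun t : Fin n => (t : ℕ) < n / 2 + 1)).card = n / 2 + 1 := by
    rw [card_filter_lt]; omega
  have hmem : (n - 1) / 2 ∈
      {d : ℕ | ∃ S : Finset (Fin n), S.card = 3 - 1 ∧ coDeg (Ebip n) S = d ∧ 0 < d} := by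
    have h0 : (0 : ℕ) < n := by omega
    have h1 : (1 : ℕ) < n := by omega
    have huv : (⟨0, h0⟩ : Fin n) ≠ ⟨1, h1⟩ := Fin.ne_of_val_ne (show (0:ℕ) ≠ 1 by omega)
    refine ⟨{⟨0, h0⟩, ⟨1, h1⟩}, card_pair huv, ?_, by omega⟩
    rw [coDeg_pair_eq _ Ebip_card3 huv,
      coN_Ebip_BB (show (0:ℕ) < n / 2 + 1 by omega) (show (1:ℕ) < n / 2 + 1 by omega) huv,
      hAcard]
  have hlb : ∀ d ∈ {d : ℕ | ∃ S : Finset (Fin n), S.card = 3 - 1 ∧ coDeg (Ebip n) S = d ∧ 0 < d},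
      (n - 1) / 2 ≤ d := by
    rintro d ⟨S, hS2, hcd, hdpos⟩
    obtain ⟨u, v, huv, rfl⟩ := Finset.card_eq_two.1 hS2
    rw [coDeg_pair_eq _ Ebip_card3 huv] at hcd
    by_cases hu : (u : ℕ) < n / 2 + 1 <;> by_cases hv : (v : ℕ) < n / 2 + 1
    · rw [coN_Ebip_BB hu hv huv, hAcard] at hcd; omega
    · rw [coN_symm (Ebip n) u v, coN_Ebip_AB hv hu] at hcd
      have hmemu : u ∈ univ.filter (fun t : Fin n => (t : ℕ) < n / 2 + 1) :=
        mem_filter.2 ⟨mem_univ _, hu⟩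
      rw [card_erase_of_mem hmemu, hBcard] at hcd
      omega
    · rw [coN_Ebip_AB hu hv] at hcd
      have hmemv : v ∈ univ.filter (fun t : Fin n => (t : ℕ) < n / 2 + 1) :=
        mem_filter.2 ⟨mem_univ _, hv⟩
      rw [card_erase_of_mem hmemv, hBcard] at hcd
      omega
    · rw [coN_Ebip_AA hu hv huv] at hcd
      simp at hcd
      omega
  exact le_antisymm (Nat.sInf_le hmem) (le_csInf ⟨_, hmem⟩ hlb)

end Aux

/-- For every integer `n ≥ 3` not divisible by 4, `co⁺ex(n, F₃,₂) = ⌊(n-1)/2⌋`. -/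
theorem coPlusEx_F32 (n : ℕ) (hn : 3 ≤ n) (hndvd : ¬ 4 ∣ n) :
    coPlusEx 3 n F32 = (n - 1) / 2 := by
  have hmem : (n - 1) / 2 ∈ {d : ℕ | ∃ E : Finset (Finset (Fin n)),
      (∀ e ∈ E, e.card = 3) ∧ E.Nonempty ∧ ¬ Contains F32 E ∧ minPosCoDeg 3 n E = d} :=
    ⟨Ebip n, Ebip_card3, Ebip_nonempty hn, Ebip_free, Ebip_minPosCoDeg hn⟩
  have hub : ∀ d ∈ {d : ℕ | ∃ E : Finset (Finset (Fin n)),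
      (∀ e ∈ E, e.card = 3) ∧ E.Nonempty ∧ ¬ Contains F32 E ∧ minPosCoDeg 3 n E = d},
      d ≤ (n - 1) / 2 := by
    rintro d ⟨E, h3, hne, hfree, rfl⟩
    exact upper_bound E h3 hne hfree hndvd
  unfold coPlusEx
  exact le_antisymm (csSup_le ⟨_, hmem⟩ hub) (le_csSup ⟨(n - 1) / 2, hub⟩ hmem)
end

section
/- For every integer n ≥ 3, the positive co-degree Turán number of the Fano plane satisfies co⁺ex(n, 𝔽) ≤ 2n/3; moreover, if n is divisible by 6, then co⁺ex(n, 𝔽) = 2n/3. -/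
open Finset

namespace FanoAux

def vec7 {α : Type*} (u v w x z d y : α) : Fin 7 → α := fun i =>
  match i with
  | ⟨0,_⟩ => u | ⟨1,_⟩ => v | ⟨2,_⟩ => w | ⟨3,_⟩ => x
  | ⟨4,_⟩ => z | ⟨5,_⟩ => d | ⟨6,_⟩ => y

lemma inj7 {α : Type*} {u v w x z d y : α}
    (h1 : u ≠ v) (h2 : u ≠ w) (h3 : u ≠ x) (h4 : u ≠ z) (h5 : u ≠ d) (h6 : u ≠ y)
    (h7 : v ≠ w) (h8 : v ≠ x) (h9 : v ≠ z) (h10 : v ≠ d) (h11 : v ≠ y)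
    (h12 : w ≠ x) (h13 : w ≠ z) (h14 : w ≠ d) (h15 : w ≠ y)
    (h16 : x ≠ z) (h17 : x ≠ d) (h18 : x ≠ y)
    (h19 : z ≠ d) (h20 : z ≠ y) (h21 : d ≠ y) :
    Function.Injective (vec7 u v w x z d y) := by
  intro i j hij
  fin_cases i <;> fin_cases j <;>
    first
      | rfl
      | exact absurd hij (by first | assumption | (apply Ne.symm; assumption))

variable {n : ℕ}

def NSet (E : Finset (Finset (Fin n))) (x y : Fin n) : Finset (Fin n) :=
  univ.filter (fun w => ({x, y, w} : Finset (Fin n)) ∈ E)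

lemma mem_NSet {E : Finset (Finset (Fin n))} (h3 : ∀ e ∈ E, e.card = 3) {x y w : Fin n}
    (hxy : x ≠ y) (hw : w ∈ NSet E x y) :
    ({x,y,w} : Finset (Fin n)) ∈ E ∧ w ≠ x ∧ w ≠ y := by
  have he : ({x,y,w} : Finset (Fin n)) ∈ E := (mem_filter.mp hw).2
  have hc := h3 _ he
  refine ⟨he, ?_, ?_⟩
  · rintro rfl
    have h1 : ({w,y,w} : Finset (Fin n)) = {w,y} := by ext t; simp; tauto
    rw [h1, card_pair hxy] at hc
    omega
  · rintro rfl
    have h1 : ({x,w,w} : Finset (Fin n)) = {x,w} := by ext t; simp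
    rw [h1, card_pair hxy] at hc
    omega

lemma NSet_card_le (E : Finset (Finset (Fin n))) (x y : Fin n) : (NSet E x y).card ≤ n := by
  refine le_trans (card_filter_le _ _) ?_
  simp

lemma coDeg_pair (E : Finset (Finset (Fin n))) (h3 : ∀ e ∈ E, e.card = 3) {x y : Fin n}
    (hxy : x ≠ y) : coDeg E {x,y} = (NSet E x y).card := by
  apply le_antisymm
  · apply Finset.card_le_card_of_surjOn (fun w => ({x,y,w} : Finset (Fin n)))
    intro e he
    simp only [coe_filter, Set.mem_setOf_eq] at he
    obtain ⟨he, hsub⟩ := he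
    have hc := h3 _ he
    have hx : x ∈ e := hsub (by simp)
    have hy : y ∈ e := hsub (by simp)
    have hsd : (e \ ({x,y} : Finset (Fin n))).Nonempty := by
      rw [← card_pos, card_sdiff_of_subset hsub, card_pair hxy]
      omega
    obtain ⟨w, hw⟩ := hsd
    have hwe : w ∈ e := (mem_sdiff.mp hw).1
    have hwxy := (mem_sdiff.mp hw).2
    have hwx : w ≠ x := by rintro rfl; simp at hwxy
    have hwy : w ≠ y := by rintro rfl; simp at hwxy
    have hsub2 : ({x,y,w} : Finset (Fin n)) ⊆ e := by
      intro t ht; simp at ht; rcases ht with rfl|rfl|rfl <;> assumption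
    have hcard : ({x,y,w} : Finset (Fin n)).card = 3 := by
      rw [card_insert_of_notMem (by simp [hxy, hwx.symm]),
        card_insert_of_notMem (by simp [hwy.symm]), card_singleton]
    have heq : ({x,y,w} : Finset (Fin n)) = e :=
      Finset.eq_of_subset_of_card_le hsub2 (by omega)
    refine ⟨w, ?_, heq⟩
    have : w ∈ NSet E x y := by
      simp only [NSet, mem_filter]
      rw [heq]; exact ⟨mem_univ w, he⟩
    exact this
  · apply Finset.card_le_card_of_injOn (fun w => ({x,y,w} : Finset (Fin n)))
    · intro w hw
      obtain ⟨he, hwx, hwy⟩ := mem_NSet h3 hxy hw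
      refine mem_filter.mpr ⟨he, ?_⟩
      intro t ht; simp at ht ⊢; tauto
    · intro w hw w' hw' heq
      obtain ⟨_, hwx, hwy⟩ := mem_NSet h3 hxy (by simpa using hw)
      obtain ⟨_, hwx', hwy'⟩ := mem_NSet h3 hxy (by simpa using hw')
      simp only at heq
      have : w' ∈ ({x,y,w} : Finset (Fin n)) := by rw [heq]; simp
      simp at this; tauto

lemma min_le_NSet (E : Finset (Finset (Fin n))) (h3 : ∀ e ∈ E, e.card = 3) {x y : Fin n}
    {e : Finset (Fin n)} (hxy : x ≠ y) (he : e ∈ E) (hx : x ∈ e) (hy : y ∈ e) :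
    minPosCoDeg 3 n E ≤ (NSet E x y).card := by
  rw [← coDeg_pair E h3 hxy]
  apply Nat.sInf_le
  refine ⟨{x,y}, by rw [card_pair hxy], rfl, ?_⟩
  rw [coDeg]
  apply card_pos.mpr
  refine ⟨e, mem_filter.mpr ⟨he, ?_⟩⟩
  intro t ht; simp at ht; rcases ht with rfl|rfl <;> assumption

lemma inter_card (A B : Finset (Fin n)) : A.card + B.card ≤ n + (A ∩ B).card := by
  have h := Finset.card_union_add_card_inter A B
  have h2 : (A ∪ B).card ≤ n := le_trans (card_le_univ _) (by simp)
  omega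

set_option maxHeartbeats 2000000 in
lemma upper (E : Finset (Finset (Fin n))) (h3 : ∀ e ∈ E, e.card = 3) (hne : E.Nonempty)
    (hfree : ¬ Contains Fano E) : 3 * minPosCoDeg 3 n E ≤ 2 * n := by
  by_contra hcon
  push_neg at hcon
  set m := minPosCoDeg 3 n E with hm
  obtain ⟨e₀, he₀⟩ := hne
  obtain ⟨x, y, z, hxy, hxz, hyz, hexyz⟩ := Finset.card_eq_three.mp (h3 _ he₀)
  have hx : x ∈ e₀ := by rw [hexyz]; simp
  have hy : y ∈ e₀ := by rw [hexyz]; simp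
  have hz : z ∈ e₀ := by rw [hexyz]; simp
  have hNxy := min_le_NSet E h3 hxy he₀ hx hy
  have hNxz := min_le_NSet E h3 hxz he₀ hx hz
  have hNyz := min_le_NSet E h3 hyz he₀ hy hz
  have hmn : m ≤ n := le_trans hNxy (NSet_card_le E x y)
  -- find d completing K4
  have h1 := inter_card (NSet E x y) (NSet E x z)
  have h2 := inter_card (NSet E x y ∩ NSet E x z) (NSet E y z)
  obtain ⟨d, hd⟩ := card_pos.mp (show 0 < (NSet E x y ∩ NSet E x z ∩ NSet E y z).card by omega)
  simp only [mem_inter] at hd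
  obtain ⟨⟨hd1, hd2⟩, hd3⟩ := hd
  obtain ⟨hedab, hdx, hdy⟩ := mem_NSet h3 hxy hd1   -- {x,y,d} ∈ E
  obtain ⟨hedac, _, hdz⟩ := mem_NSet h3 hxz hd2     -- {x,z,d} ∈ E
  obtain ⟨hedbc, _, _⟩ := mem_NSet h3 hyz hd3       -- {y,z,d} ∈ E
  have hNxd := min_le_NSet E h3 (hdx.symm : x ≠ d) hedab (by simp) (by simp)
  have hNyd := min_le_NSet E h3 (hdy.symm : y ≠ d) hedab (by simp) (by simp)
  have hNzd := min_le_NSet E h3 (hdz.symm : z ≠ d) hedac (by simp) (by simp)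
  -- find u ∈ N(x,y) ∩ N(z,d)
  have h4 := inter_card (NSet E x y) (NSet E z d)
  obtain ⟨u, hu⟩ := card_pos.mp (show 0 < (NSet E x y ∩ NSet E z d).card by omega)
  simp only [mem_inter] at hu
  obtain ⟨hu1, hu2⟩ := hu
  obtain ⟨heuab, hux, huy⟩ := mem_NSet h3 hxy hu1   -- {x,y,u} ∈ E
  obtain ⟨heucd, huz, hud⟩ := mem_NSet h3 (hdz.symm : z ≠ d) hu2  -- {z,d,u} ∈ E
  have hNux := min_le_NSet E h3 hux heuab (by simp) (by simp)
  -- find v ∈ N(x,d) ∩ N(y,z) ∩ N(u,x)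
  have h5 := inter_card (NSet E x d) (NSet E y z)
  have h6 := inter_card (NSet E x d ∩ NSet E y z) (NSet E u x)
  obtain ⟨v, hv⟩ := card_pos.mp
    (show 0 < (NSet E x d ∩ NSet E y z ∩ NSet E u x).card by omega)
  simp only [mem_inter] at hv
  obtain ⟨⟨hv1, hv2⟩, hv3⟩ := hv
  obtain ⟨hevad, hvx, hvd⟩ := mem_NSet h3 (hdx.symm : x ≠ d) hv1  -- {x,d,v} ∈ E
  obtain ⟨hevbc, hvy, hvz⟩ := mem_NSet h3 hyz hv2                 -- {y,z,v} ∈ E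
  obtain ⟨hevux, hvu, _⟩ := mem_NSet h3 hux hv3                   -- {u,x,v} ∈ E
  have hNuv := min_le_NSet E h3 (hvu.symm : u ≠ v) hevux (by simp) (by simp)
  -- find w ∈ N(x,z) ∩ N(y,d) ∩ N(u,v)
  have h7 := inter_card (NSet E x z) (NSet E y d)
  have h8 := inter_card (NSet E x z ∩ NSet E y d) (NSet E u v)
  obtain ⟨w, hw⟩ := card_pos.mp
    (show 0 < (NSet E x z ∩ NSet E y d ∩ NSet E u v).card by omega)
  simp only [mem_inter] at hw
  obtain ⟨⟨hw1, hw2⟩, hw3⟩ := hw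
  obtain ⟨hewac, hwx, hwz⟩ := mem_NSet h3 hxz hw1                 -- {x,z,w} ∈ E
  obtain ⟨hewbd, hwy, hwd⟩ := mem_NSet h3 (hdy.symm : y ≠ d) hw2  -- {y,d,w} ∈ E
  obtain ⟨hewuv, hwu, hwv⟩ := mem_NSet h3 (hvu.symm : u ≠ v) hw3  -- {u,v,w} ∈ E
  -- build the Fano copy:  f = vec7 u v w x z d y
  apply hfree
  refine ⟨vec7 u v w x z d y, ?_, ?_⟩
  · exact inj7 hvu.symm hwu.symm hux huz hud huy
      hwv.symm hvx hvz hvd hvy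
      hwx hwz hwd hwy
      hxz (hdx.symm) hxy.symm.symm
      (hdz.symm) hyz.symm (hdy)
  · intro e he
    simp only [Fano, mem_insert, mem_singleton] at he
    rcases he with rfl|rfl|rfl|rfl|rfl|rfl|rfl
    · -- {0,1,2} ↦ {u,v,w}
      rw [show ({0,1,2} : Finset (Fin 7)).image (vec7 u v w x z d y) = {u,v,w} by
        rw [Finset.image_insert, Finset.image_insert, Finset.image_singleton]; rfl]
      exact hewuv
    · -- {2,3,4} ↦ {w,x,z}
      rw [show ({2,3,4} : Finset (Fin 7)).image (vec7 u v w x z d y) = {w,x,z} by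
        rw [Finset.image_insert, Finset.image_insert, Finset.image_singleton]; rfl]
      rw [show ({w,x,z} : Finset (Fin n)) = {x,z,w} by ext t; simp; tauto]
      exact hewac
    · -- {0,4,5} ↦ {u,z,d}
      rw [show ({0,4,5} : Finset (Fin 7)).image (vec7 u v w x z d y) = {u,z,d} by
        rw [Finset.image_insert, Finset.image_insert, Finset.image_singleton]; rfl]
      rw [show ({u,z,d} : Finset (Fin n)) = {z,d,u} by ext t; simp; tauto]
      exact heucd
    · -- {1,3,5} ↦ {v,x,d}
      rw [show ({1,3,5} : Finset (Fin 7)).image (vec7 u v w x z d y) = {v,x,d} by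
        rw [Finset.image_insert, Finset.image_insert, Finset.image_singleton]; rfl]
      rw [show ({v,x,d} : Finset (Fin n)) = {x,d,v} by ext t; simp; tauto]
      exact hevad
    · -- {0,3,6} ↦ {u,x,y}
      rw [show ({0,3,6} : Finset (Fin 7)).image (vec7 u v w x z d y) = {u,x,y} by
        rw [Finset.image_insert, Finset.image_insert, Finset.image_singleton]; rfl]
      rw [show ({u,x,y} : Finset (Fin n)) = {x,y,u} by ext t; simp; tauto]
      exact heuab
    · -- {1,4,6} ↦ {v,z,y}
      rw [show ({1,4,6} : Finset (Fin 7)).image (vec7 u v w x z d y) = {v,z,y} by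
        rw [Finset.image_insert, Finset.image_insert, Finset.image_singleton]; rfl]
      rw [show ({v,z,y} : Finset (Fin n)) = {y,z,v} by ext t; simp; tauto]
      exact hevbc
    · -- {2,5,6} ↦ {w,d,y}
      rw [show ({2,5,6} : Finset (Fin 7)).image (vec7 u v w x z d y) = {w,d,y} by
        rw [Finset.image_insert, Finset.image_insert, Finset.image_singleton]; rfl]
      rw [show ({w,d,y} : Finset (Fin n)) = {y,d,w} by ext t; simp; tauto]
      exact hewbd

lemma card3_iff {α : Type*} [DecidableEq α] {a b c : α} (hab : a ≠ b) :
    ({a,b,c} : Finset α).card = 3 ↔ (c ≠ a ∧ c ≠ b) := by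
  constructor
  · intro h
    constructor
    · rintro rfl
      have : ({c,b,c} : Finset α) = {c,b} := by ext t; simp; tauto
      rw [this, card_pair hab] at h; omega
    · rintro rfl
      have : ({a,c,c} : Finset α) = {a,c} := by ext t; simp
      rw [this, card_pair hab] at h; omega
  · rintro ⟨hca, hcb⟩
    rw [card_insert_of_notMem (by simp [hab, hca.symm]),
      card_insert_of_notMem (by simp [hcb.symm]), card_singleton]

-- the 6-partition map
def gmod (s : ℕ) : Fin (6*s) → Fin 6 := fun v => ⟨v.val % 6, Nat.mod_lt _ (by norm_num)⟩

lemma class_card (s : ℕ) (i : Fin 6) :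
    (univ.filter (fun v : Fin (6*s) => gmod s v = i)).card = s := by
  have hb : (univ.filter (fun v : Fin (6*s) => gmod s v = i)).card = (Finset.range s).card := by
    apply Finset.card_bij' (fun (v : Fin (6*s)) _ => v.val / 6)
        (fun (j : ℕ) (hj : j ∈ Finset.range s) =>
          (⟨6*j + i.val, by have h1 := i.isLt; have h2 := Finset.mem_range.mp hj; omega⟩ :
            Fin (6*s)))
    case hi =>
      intro v hv
      simp only [mem_filter, mem_univ, true_and, gmod, Fin.ext_iff] at hv
      have h2 := v.isLt
      simp only [Finset.mem_range]
      omega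
    case hj =>
      intro j hj
      have h2 := Finset.mem_range.mp hj
      simp only [mem_filter, mem_univ, true_and, gmod, Fin.ext_iff]
      have := i.isLt
      omega
    case left_inv =>
      intro v hv
      simp only [mem_filter, mem_univ, true_and, gmod, Fin.ext_iff] at hv
      apply Fin.ext
      show 6 * (v.val / 6) + i.val = v.val
      omega
    case right_inv =>
      intro j hj
      have h2 := Finset.mem_range.mp hj
      have := i.isLt
      show (6 * j + i.val) / 6 = j
      omega
  rw [hb, Finset.card_range]

def Econ (s : ℕ) : Finset (Finset (Fin (6*s))) :=
  (univ.powersetCard 3).filter (fun e => (e.image (gmod s)).card = 3)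

lemma Econ_card (s : ℕ) : ∀ e ∈ Econ s, e.card = 3 := by
  intro e he
  simp only [Econ, mem_filter, Finset.mem_powersetCard] at he
  exact he.1.2

lemma NSet_Econ {s : ℕ} {x y : Fin (6*s)} (hxy : x ≠ y) (hg : gmod s x ≠ gmod s y) :
    NSet (Econ s) x y = univ.filter (fun w => gmod s w ≠ gmod s x ∧ gmod s w ≠ gmod s y) := by
  ext w
  simp only [NSet, Econ, mem_filter, mem_univ, true_and, Finset.mem_powersetCard]
  rw [Finset.image_insert, Finset.image_insert, Finset.image_singleton]
  constructor
  · rintro ⟨⟨-, hc⟩, hic⟩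
    have h1 := (card3_iff hxy).mp hc
    have h2 := (card3_iff hg).mp hic
    exact ⟨h2.1, h2.2⟩
  · rintro ⟨h1, h2⟩
    have hwx : w ≠ x := fun h => h1 (by rw [h])
    have hwy : w ≠ y := fun h => h2 (by rw [h])
    exact ⟨⟨subset_univ _, (card3_iff hxy).mpr ⟨hwx, hwy⟩⟩, (card3_iff hg).mpr ⟨h1, h2⟩⟩

lemma NSet_Econ_card {s : ℕ} {x y : Fin (6*s)} (hxy : x ≠ y) (hg : gmod s x ≠ gmod s y) :
    (NSet (Econ s) x y).card = 4*s := by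
  rw [NSet_Econ hxy hg]
  have key : (univ.filter (fun w : Fin (6*s) => gmod s w = gmod s x ∨ gmod s w = gmod s y)).card
      = 2*s := by
    rw [Finset.filter_or, Finset.card_union_of_disjoint, class_card, class_card]
    · ring
    · rw [Finset.disjoint_filter]
      intro a _ h1 h2
      exact hg (h1 ▸ h2)
  have h2 := Finset.card_filter_add_card_filter_not
    (s := (univ : Finset (Fin (6*s)))) (p := fun w => gmod s w = gmod s x ∨ gmod s w = gmod s y)
  have h3 : (univ.filter (fun w : Fin (6*s) =>
      ¬(gmod s w = gmod s x ∨ gmod s w = gmod s y))) =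
      univ.filter (fun w => gmod s w ≠ gmod s x ∧ gmod s w ≠ gmod s y) := by
    apply Finset.filter_congr
    intro a _
    simp [not_or]
  rw [h3] at h2
  simp only [Finset.card_univ, Fintype.card_fin] at h2
  omega


lemma fano_pair_cover : ∀ p q : Fin 7, p ≠ q → ∃ e ∈ Fano, p ∈ e ∧ q ∈ e := by decide

lemma Econ_nonempty {s : ℕ} (hs : 1 ≤ s) : (Econ s).Nonempty := by
  have h0 : (0:ℕ) < 6*s := by omega
  have h1 : (1:ℕ) < 6*s := by omega
  have h2 : (2:ℕ) < 6*s := by omega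
  refine ⟨{⟨0,h0⟩, ⟨1,h1⟩, ⟨2,h2⟩}, ?_⟩
  simp only [Econ, mem_filter, Finset.mem_powersetCard]
  have e01 : (⟨0,h0⟩ : Fin (6*s)) ≠ ⟨1,h1⟩ := by simp [Fin.ext_iff]
  have g01 : gmod s ⟨0,h0⟩ ≠ gmod s ⟨1,h1⟩ := by simp [gmod, Fin.ext_iff]
  refine ⟨⟨subset_univ _, ?_⟩, ?_⟩
  · rw [card3_iff e01]
    simp [Fin.ext_iff]
  · rw [Finset.image_insert, Finset.image_insert, Finset.image_singleton, card3_iff g01]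
    simp [gmod, Fin.ext_iff]

lemma Econ_free (s : ℕ) : ¬ Contains Fano (Econ s) := by
  rintro ⟨f, hinj, hmap⟩
  obtain ⟨p, q, hpq, hgf⟩ := Fintype.exists_ne_map_eq_of_card_lt (gmod s ∘ f)
    (by simp [Fintype.card_fin])
  obtain ⟨e, he, hp, hq⟩ := fano_pair_cover p q hpq
  have hmem := hmap e he
  simp only [Econ, mem_filter, Finset.mem_powersetCard] at hmem
  obtain ⟨⟨-, hcard⟩, himg⟩ := hmem
  rw [Finset.image_image] at himg
  -- (e.image (gmod s ∘ f)).card = 3 but gmod∘f not injective on e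
  have hsub : e.image (gmod s ∘ f) = (e.erase q).image (gmod s ∘ f) := by
    ext t
    simp only [Finset.mem_image, Finset.mem_erase]
    constructor
    · rintro ⟨u, hu, rfl⟩
      by_cases huq : u = q
      · exact ⟨p, ⟨hpq, hp⟩, by rw [huq]; exact hgf⟩
      · exact ⟨u, ⟨huq, hu⟩, rfl⟩
    · rintro ⟨u, ⟨-, hu⟩, rfl⟩
      exact ⟨u, hu, rfl⟩
  have hec : e.card = 3 := by
    have : e.image f ∈ Econ s := hmap e he
    have h2 := Econ_card s _ this
    rw [Finset.card_image_of_injective _ hinj] at h2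
    exact h2
  have hle : (e.image (gmod s ∘ f)).card ≤ 2 := by
    rw [hsub]
    refine le_trans (Finset.card_image_le) ?_
    rw [Finset.card_erase_of_mem hq, hec]
  omega

lemma gmod_ne_of_pos {s : ℕ} {x y : Fin (6*s)} (hxy : x ≠ y) {e : Finset (Fin (6*s))}
    (he : e ∈ Econ s) (hx : x ∈ e) (hy : y ∈ e) : gmod s x ≠ gmod s y := by
  intro hg
  simp only [Econ, mem_filter, Finset.mem_powersetCard] at he
  obtain ⟨⟨-, hcard⟩, himg⟩ := he
  have hsub : e.image (gmod s) = (e.erase y).image (gmod s) := by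
    ext t
    simp only [Finset.mem_image, Finset.mem_erase]
    constructor
    · rintro ⟨u, hu, rfl⟩
      by_cases huq : u = y
      · exact ⟨x, ⟨hxy, hx⟩, by rw [huq]; exact hg⟩
      · exact ⟨u, ⟨huq, hu⟩, rfl⟩
    · rintro ⟨u, ⟨-, hu⟩, rfl⟩
      exact ⟨u, hu, rfl⟩
  rw [hsub] at himg
  have := le_trans (Finset.card_image_le (f := gmod s) (s := e.erase y))
    (le_of_eq (Finset.card_erase_of_mem hy))
  rw [hcard] at this
  omega

lemma Econ_minPos {s : ℕ} (hs : 1 ≤ s) : minPosCoDeg 3 (6*s) (Econ s) = 4*s := by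
  have key : ∀ d : ℕ, (∃ S : Finset (Fin (6*s)), S.card = 3 - 1 ∧ coDeg (Econ s) S = d ∧ 0 < d)
      → d = 4*s := by
    rintro d ⟨S, hS, hcd, hpos⟩
    obtain ⟨x, y, hxy, rfl⟩ := Finset.card_eq_two.mp hS
    have hpos' : 0 < ((Econ s).filter (fun e => ({x,y} : Finset (Fin (6*s))) ⊆ e)).card := by
      rw [show ((Econ s).filter (fun e => ({x,y} : Finset (Fin (6*s))) ⊆ e)).card
        = coDeg (Econ s) {x,y} from rfl, hcd]
      exact hpos
    obtain ⟨e, hef⟩ := card_pos.mp hpos'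
    rw [mem_filter] at hef
    obtain ⟨he, hsube⟩ := hef
    have hx : x ∈ e := hsube (by simp)
    have hy : y ∈ e := hsube (by simp)
    have hg := gmod_ne_of_pos hxy he hx hy
    rw [← hcd, coDeg_pair (Econ s) (Econ_card s) hxy, NSet_Econ_card hxy hg]
  -- the set is {4*s}
  have hmem : ∃ S : Finset (Fin (6*s)), S.card = 3 - 1 ∧ coDeg (Econ s) S = 4*s ∧ 0 < 4*s := by
    have h0 : (0:ℕ) < 6*s := by omega
    have h1 : (1:ℕ) < 6*s := by omega
    have e01 : (⟨0,h0⟩ : Fin (6*s)) ≠ ⟨1,h1⟩ := by simp [Fin.ext_iff]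
    have g01 : gmod s ⟨0,h0⟩ ≠ gmod s ⟨1,h1⟩ := by simp [gmod, Fin.ext_iff]
    refine ⟨{⟨0,h0⟩, ⟨1,h1⟩}, by rw [card_pair e01], ?_, by omega⟩
    rw [coDeg_pair (Econ s) (Econ_card s) e01, NSet_Econ_card e01 g01]
  apply le_antisymm
  · exact Nat.sInf_le hmem
  · apply le_csInf
    · obtain ⟨S, h1, h2, h3⟩ := hmem
      exact ⟨4*s, S, h1, h2, h3⟩
    · rintro b ⟨S, h1, h2, h3⟩
      rw [key b ⟨S, h1, h2, h3⟩]


end FanoAux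

/-- For every `n ≥ 3`, `co⁺ex(n, 𝔽) ≤ 2n/3` for the Fano plane `𝔽`; moreover this is
an equality when `6 ∣ n`. -/
theorem coPlusEx_Fano (n : ℕ) (hn : 3 ≤ n) :
    (coPlusEx 3 n Fano : ℝ) ≤ 2 * n / 3 ∧
    (6 ∣ n → (coPlusEx 3 n Fano : ℝ) = 2 * n / 3) := by
  have hub : ∀ d ∈ {d : ℕ | ∃ E : Finset (Finset (Fin n)),
      (∀ e ∈ E, e.card = 3) ∧ E.Nonempty ∧ ¬ Contains Fano E ∧ minPosCoDeg 3 n E = d},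
      d ≤ 2*n/3 := by
    rintro d ⟨E, h3, hne, hfree, hmin⟩
    have h := FanoAux.upper E h3 hne hfree
    rw [hmin] at h
    omega
  have hle : coPlusEx 3 n Fano ≤ 2*n/3 := csSup_le' hub
  constructor
  · refine le_trans (Nat.cast_le.mpr hle) ?_
    have h := Nat.cast_div_le (α := ℝ) (m := 2*n) (n := 3)
    push_cast at h ⊢
    linarith
  · rintro ⟨s, rfl⟩
    have hs : 1 ≤ s := by omega
    have hmem : (4*s) ∈ {d : ℕ | ∃ E : Finset (Finset (Fin (6*s))),
        (∀ e ∈ E, e.card = 3) ∧ E.Nonempty ∧ ¬ Contains Fano E ∧ minPosCoDeg 3 (6*s) E = d} :=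
      ⟨FanoAux.Econ s, FanoAux.Econ_card s, FanoAux.Econ_nonempty hs, FanoAux.Econ_free s,
        FanoAux.Econ_minPos hs⟩
    have hbdd : BddAbove {d : ℕ | ∃ E : Finset (Finset (Fin (6*s))),
        (∀ e ∈ E, e.card = 3) ∧ E.Nonempty ∧ ¬ Contains Fano E ∧ minPosCoDeg 3 (6*s) E = d} :=
      ⟨2*(6*s)/3, hub⟩
    have hge : 4*s ≤ coPlusEx 3 (6*s) Fano := le_csSup hbdd hmem
    have heq : coPlusEx 3 (6*s) Fano = 4*s := le_antisymm (by omega) hge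
    rw [heq]
    push_cast
    ring
end
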